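/- arXiv:1008.4878 — 6 statements merged into one kernel-verified Lean document; each statement's English description precedes it below -/
import Mathlib

section
/- Let (G,j,π) be an iterated extension of (KNP) by (PQR) whose Q-main extension (G,i,π) (with i := j∘i₀) has outer action θ, and set φ := φ̄∘π. Then the map sending λ ∈ Z^1(R,Z(K)^P) to the map G → G, g ↦ i(λ(φ(g)))·g, is a well-defined group isomorphism from Z^1(R,Z(K)^P) onto Aut(KNGQR); its inverse sends ξ ∈ Aut(KNGQR) to the unique λ with i(λ(r)) = ξ(u(r))·u(r)⁻¹ for all r, for any section u : R → G of φ with u(1) = 1. In particular Aut(KNGQR) is an abelian subgroup of Aut(G), independent (via this isomorphism) of the iterated extension. -/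
/-!
Write an automorphism `ξ` of `G` as `ξ g = d g * g`. If `ξ` induces the identity on `Q` and fixes
`j(N)` pointwise, then `d g` lies in `i(K) = ker π`, centralizes the normal subgroup
`j(N) ⊇ i(K)` (so it lies in `i(Z(K))`), and only depends on the coset `g·j(N)`, i.e. on `φ g`:
`ξ` is the twist `g ↦ i(λ(φ g))·g` by some `λ : R → Z(K)`. Since conjugation by `g` acts on
`i(Z(K))` through `θ(π g)`, such a twist is multiplicative exactly when `λ` satisfies the cocycle
identity. It fixes `j(N)` when `λ 1 = 1`; conversely a multiplicative twist fixing `j(N)` forces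
`λ 1 = 1`, and makes `j(N)` commute with the values of `λ`, which is `P`-invariance. Composing
twists multiplies the cocycles pointwise, which is commutative because their values are central.
-/

namespace IES

section OutDef

variable (K : Type*) [Group K]

/-- The subgroup of inner automorphisms of `K` inside `MulAut K`. -/
def Inn : Subgroup (MulAut K) := (MulAut.conj : K →* MulAut K).range

instance : (Inn K).Normal := by
  constructor
  rintro x ⟨k, rfl⟩ η
  refine ⟨η k, ?_⟩
  ext y
  simp [MulAut.conj_apply, MulAut.mul_apply, map_mul, map_inv]

/-- The outer automorphism group `Out K := Aut K / Inn K`. -/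
abbrev Out := MulAut K ⧸ Inn K

/-- Canonical projection `Aut K → Out K`. -/
def toOut : MulAut K →* Out K := QuotientGroup.mk' (Inn K)

lemma center_map (η : K ≃* K) {z : K} (hz : z ∈ Subgroup.center K) :
    η z ∈ Subgroup.center K := by
  rw [Subgroup.mem_center_iff] at hz ⊢
  intro g
  calc g * η z = η (η.symm g * z) := by rw [map_mul, η.apply_symm_apply]
    _ = η (z * η.symm g) := by rw [hz (η.symm g)]
    _ = η z * g := by rw [map_mul, η.apply_symm_apply]

/-- Restriction of automorphisms of `K` to its center. -/
def centerAut : MulAut K →* MulAut (Subgroup.center K) where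
  toFun η :=
    { toFun := fun z => ⟨η z.1, center_map K η z.2⟩
      invFun := fun z => ⟨η.symm z.1, center_map K η.symm z.2⟩
      left_inv := fun z => Subtype.ext (η.symm_apply_apply z.1)
      right_inv := fun z => Subtype.ext (η.apply_symm_apply z.1)
      map_mul' := fun a b => Subtype.ext (map_mul η a.1 b.1) }
  map_one' := by ext z; rfl
  map_mul' := fun a b => by ext z; rfl

lemma centerAut_inn : ∀ x ∈ Inn K, centerAut K x = 1 := by
  rintro x ⟨k, rfl⟩
  ext z
  have hz := z.2
  rw [Subgroup.mem_center_iff] at hz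
  show k * z.1 * k⁻¹ = z.1
  rw [hz k, mul_inv_cancel_right]

/-- The action of `Out K` on the center of `K`. -/
def outCenter : Out K →* MulAut (Subgroup.center K) :=
  QuotientGroup.lift (Inn K) (centerAut K) (centerAut_inn K)

end OutDef

section ModK

variable {K N : Type*} [Group K] [Group N]

/-- The group of automorphisms of `N` stabilizing the image of `K`. -/
def autK (i0 : K →* N) : Subgroup (MulAut N) where
  carrier := {η | ∀ n, η n ∈ i0.range ↔ n ∈ i0.range}
  one_mem' := by intro n; rw [MulAut.one_apply]
  mul_mem' := by
    intro a b ha hb n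
    rw [MulAut.mul_apply]
    exact (ha (b n)).trans (hb n)
  inv_mem' := by
    intro a ha n
    have h := ha (a⁻¹ n)
    rw [MulAut.apply_inv_self] at h
    exact h.symm

lemma mem_autK_iff {i0 : K →* N} {η : MulAut N} :
    η ∈ autK i0 ↔ ∀ n, η n ∈ i0.range ↔ n ∈ i0.range := Iff.rfl

/-- The subgroup of `autK i0` of inner automorphisms induced by elements of `i0 K`. -/
def cInn (i0 : K →* N) : Subgroup (autK i0) where
  carrier := {η | ∃ k : K, (η : MulAut N) = MulAut.conj (i0 k)}
  one_mem' := ⟨1, by simp⟩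
  mul_mem' := by
    rintro a b ⟨k1, h1⟩ ⟨k2, h2⟩
    exact ⟨k1 * k2, by rw [Subgroup.coe_mul, h1, h2, ← map_mul, ← map_mul]⟩
  inv_mem' := by
    rintro a ⟨k, h⟩
    exact ⟨k⁻¹, by rw [Subgroup.coe_inv, h, ← map_inv, ← map_inv]⟩

lemma conj_conj_eq (η : MulAut N) (x : N) :
    η * MulAut.conj x * η⁻¹ = MulAut.conj (η x) := by
  ext y
  simp [MulAut.conj_apply, MulAut.mul_apply, map_mul, map_inv]

instance (i0 : K →* N) : (cInn i0).Normal := by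
  constructor
  rintro c ⟨k, hk⟩ g
  obtain ⟨k', hk'⟩ := (g.2 (i0 k)).mpr ⟨k, rfl⟩
  refine ⟨k', ?_⟩
  rw [Subgroup.coe_mul, Subgroup.coe_mul, Subgroup.coe_inv, hk, conj_conj_eq, hk']

/-- The mod-`K` outer automorphism group `Out(N;K)`. -/
abbrev OutNK (i0 : K →* N) := ↥(autK i0) ⧸ cInn i0

/-- Canonical projection onto the mod-`K` outer automorphism group. -/
def mkNK (i0 : K →* N) : ↥(autK i0) →* OutNK i0 := QuotientGroup.mk' (cInn i0)

end ModK


section Cocycles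

variable {K P Q R : Type*} [Group K] [Group P] [Group Q] [Group R]

/-- Normalized 1-cocycles of `Q` with values in `Z(K)`, for the action induced by `θ`. -/
def IsZ1Q (θ : Q →* Out K) (lam : Q → ↥(Subgroup.center K)) : Prop :=
  lam 1 = 1 ∧ ∀ q1 q2 : Q, lam (q1 * q2) = lam q1 * outCenter K (θ q1) (lam q2)

/-- Normalized 1-cocycles of `P` with values in `Z(K)`, for the action induced by `θ ∘ j̄`. -/
def IsZ1P (θ : Q →* Out K) (jb : P →* Q) (lam : P → ↥(Subgroup.center K)) : Prop :=
  lam 1 = 1 ∧ ∀ p1 p2 : P, lam (p1 * p2) = lam p1 * outCenter K (θ (jb p1)) (lam p2)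

/-- Normalized 1-cocycles of `R` with values in `Z(K)^P`, where the action `θ₀` of `R`
is expressed via arbitrary `φ̄`-preimages in `Q`. -/
def IsZ1R (θ : Q →* Out K) (jb : P →* Q) (fb : Q →* R)
    (lam : R → ↥(Subgroup.center K)) : Prop :=
  lam 1 = 1 ∧
  (∀ (r : R) (p : P), outCenter K (θ (jb p)) (lam r) = lam r) ∧
  ∀ q1 q2 : Q, lam (fb q1 * fb q2) = lam (fb q1) * outCenter K (θ q1) (lam (fb q2))

/-- Normalized 2-cocycles of `R` with values in `Z(K)^P`. -/
def IsZ2R (θ : Q →* Out K) (jb : P →* Q) (fb : Q →* R)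
    (d : R → R → ↥(Subgroup.center K)) : Prop :=
  (∀ r : R, d 1 r = 1 ∧ d r 1 = 1) ∧
  (∀ (r1 r2 : R) (p : P), outCenter K (θ (jb p)) (d r1 r2) = d r1 r2) ∧
  ∀ (q1 : Q) (r2 r3 : R),
    d (fb q1) r2 * d (fb q1 * r2) r3 = outCenter K (θ q1) (d r2 r3) * d (fb q1) (r2 * r3)

/-- The cohomology class of a 1-cocycle of `P` is fixed by the `R`-action. -/
def RFixed (θ : Q →* Out K) (jb : P →* Q) (lam : P → ↥(Subgroup.center K)) : Prop :=
  ∀ q : Q, ∃ z0 : ↥(Subgroup.center K), ∀ p p' : P,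
    jb p' = q⁻¹ * jb p * q →
      outCenter K (θ q) (lam p') = z0⁻¹ * outCenter K (θ (jb p)) z0 * lam p

end Cocycles

-- provides the `CommGroup` instance on `Subgroup.center K`
open scoped IsMulCommutative

section Twist

variable {K G R : Type*} [Group K] [Group G] [Group R]

def twist (i : K →* G) (φ : G →* R) (lam : R → Subgroup.center K) (g : G) : G :=
  i (lam (φ g)) * g

variable {i : K →* G} {φ : G →* R}

lemma map_twist {H : Type*} [Group H] (ψ : G →* H) (hψ : ∀ k, ψ (i k) = 1)
    (lam : R → Subgroup.center K) (g : G) : ψ (twist i φ lam g) = ψ g := by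
  rw [twist, map_mul, hψ, one_mul]

lemma twist_twist (hφ : ∀ k, φ (i k) = 1) (lam₁ lam₂ : R → Subgroup.center K) (g : G) :
    twist i φ lam₁ (twist i φ lam₂ g) = twist i φ (lam₁ * lam₂) g := by
  rw [twist, map_twist φ hφ, twist, twist, Pi.mul_apply, Subgroup.coe_mul, map_mul, mul_assoc]

lemma twist_one (g : G) : twist i φ 1 g = g := by
  rw [twist, Pi.one_apply, OneMemClass.coe_one, map_one, one_mul]

lemma twist_eq_self_of_map_eq_one {lam : R → Subgroup.center K} (hlam : lam 1 = 1) {g : G}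
    (hg : φ g = 1) : twist i φ lam g = g := by
  rw [twist, hg, hlam, OneMemClass.coe_one, map_one, one_mul]

def twistEquiv (hφ : ∀ k, φ (i k) = 1) (lam : R → Subgroup.center K) : G ≃ G where
  toFun := twist i φ lam
  invFun := twist i φ lam⁻¹
  left_inv g := by rw [twist_twist hφ, inv_mul_cancel, twist_one]
  right_inv g := by rw [twist_twist hφ, mul_inv_cancel, twist_one]

def twistMulEquiv (hφ : ∀ k, φ (i k) = 1) (lam : R → Subgroup.center K)
    (hmul : ∀ a b, twist i φ lam (a * b) = twist i φ lam a * twist i φ lam b) : G ≃* G :=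
  { twistEquiv hφ lam with map_mul' := hmul }

lemma twist_injective (hi : Function.Injective i) (hφ : Function.Surjective φ) :
    Function.Injective (twist i φ) := by
  intro lam₁ lam₂ h
  funext r
  obtain ⟨g, rfl⟩ := hφ r
  exact Subtype.ext (hi (mul_right_cancel (congr_fun h g)))

end Twist

section Conjugation

variable {K G Q : Type*} [Group K] [Group G] [Group Q]

lemma exists_mulAut_conj {i : K →* G} (hi : Function.Injective i) [i.range.Normal] (g : G) :
    ∃ κ : MulAut K, ∀ k, i (κ k) = g * i k * g⁻¹ := by
  let e := MonoidHom.ofInjective hi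
  refine ⟨(e.trans (MulAut.conjNormal g)).trans e.symm, fun k => ?_⟩
  rw [← MonoidHom.ofInjective_apply hi, MulEquiv.trans_apply, MulEquiv.apply_symm_apply,
    MulEquiv.trans_apply, MulAut.conjNormal_apply, MonoidHom.ofInjective_apply]

lemma map_outCenter_eq_conj {i : K →* G} {π : G →* Q} {θ : Q →* Out K}
    (hi : Function.Injective i) (hker : i.range = π.ker)
    (hθ : ∀ (g : G) (κ : MulAut K), (∀ k, i (κ k) = g * i k * g⁻¹) → θ (π g) = toOut K κ)
    (g : G) (z : Subgroup.center K) :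
    i (outCenter K (θ (π g)) z) = g * i z * g⁻¹ := by
  have : i.range.Normal := hker ▸ π.normal_ker
  obtain ⟨κ, hκ⟩ := exists_mulAut_conj hi g
  rw [hθ g κ hκ]
  exact hκ z

end Conjugation

section FixedNormalSubgroup

variable {G F : Type*} [Group G] [FunLike F G G] [MonoidHomClass F G G]
  {M : Subgroup G} [M.Normal] {ξ : F}

/-- Apply `ξ` to `g⁻¹ * m * g ∈ M`. -/
lemma commute_map_mul_inv (hξ : ∀ m ∈ M, ξ m = m) {m : G} (hm : m ∈ M) (g : G) :
    Commute m (ξ g * g⁻¹) := by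
  have h := hξ _ (Subgroup.Normal.conj_mem' ‹_› m hm g)
  rw [map_mul, map_mul, map_inv, hξ m hm] at h
  calc m * (ξ g * g⁻¹) = ξ g * ((ξ g)⁻¹ * m * ξ g) * g⁻¹ := by group
    _ = ξ g * g⁻¹ * m := by rw [h]; group

lemma map_mul_inv_eq_of_mul_inv_mem (hξ : ∀ m ∈ M, ξ m = m) {g₁ g₂ : G}
    (h : g₂ * g₁⁻¹ ∈ M) : ξ g₂ * g₂⁻¹ = ξ g₁ * g₁⁻¹ := by
  have hc := (commute_map_mul_inv hξ h g₁).eq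
  calc ξ g₂ * g₂⁻¹ = ξ (g₂ * g₁⁻¹) * (ξ g₁ * g₁⁻¹) * (g₂ * g₁⁻¹)⁻¹ := by
        rw [map_mul, map_inv]; group
    _ = ξ g₁ * g₁⁻¹ := by rw [hξ _ h, hc]; group

end FixedNormalSubgroup

lemma mem_center_of_commute {K G : Type*} [Group K] [Group G] {i : K →* G}
    (hi : Function.Injective i) {k : K} (h : ∀ a, Commute (i a) (i k)) :
    k ∈ Subgroup.center K :=
  Subgroup.mem_center_iff.mpr fun a => hi (by rw [map_mul, map_mul]; exact h a)

lemma IsZ1R.mul {K P Q R : Type*} [Group K] [Group P] [Group Q] [Group R]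
    {θ : Q →* Out K} {jb : P →* Q} {fb : Q →* R} {lam₁ lam₂ : R → Subgroup.center K}
    (h₁ : IsZ1R θ jb fb lam₁) (h₂ : IsZ1R θ jb fb lam₂) : IsZ1R θ jb fb (lam₁ * lam₂) := by
  obtain ⟨h₁one, h₁fix, h₁mul⟩ := h₁
  obtain ⟨h₂one, h₂fix, h₂mul⟩ := h₂
  refine ⟨by simp [h₁one, h₂one], fun r p => by simp [h₁fix, h₂fix], fun q₁ q₂ => ?_⟩
  simp only [Pi.mul_apply, h₁mul, h₂mul, map_mul]
  exact mul_mul_mul_comm _ _ _ _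

section IteratedExtension

variable {K N P Q R G : Type*} [Group K] [Group N] [Group P] [Group Q] [Group R] [Group G]
  {i : K →* G} {π : G →* Q} {fb : Q →* R} {θ : Q →* Out K}

lemma twist_mul_iff (hi : Function.Injective i)
    (hact : ∀ g z, i (outCenter K (θ (π g)) z) = g * i z * g⁻¹)
    (lam : R → Subgroup.center K) (a b : G) :
    twist i (fb.comp π) lam (a * b) = twist i (fb.comp π) lam a * twist i (fb.comp π) lam b ↔
      lam (fb (π a) * fb (π b)) = lam (fb (π a)) * outCenter K (θ (π a)) (lam (fb (π b))) := by
  simp only [twist, MonoidHom.comp_apply, map_mul]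
  rw [show i (lam (fb (π a))) * a * (i (lam (fb (π b))) * b) =
      i (lam (fb (π a))) * (a * i (lam (fb (π b))) * a⁻¹) * (a * b) by group,
    mul_left_inj, ← hact, ← map_mul i, ← Subgroup.coe_mul, hi.eq_iff, Subtype.coe_inj]

lemma twist_mul_of_isZ1R {jb : P →* Q} (hi : Function.Injective i)
    (hact : ∀ g z, i (outCenter K (θ (π g)) z) = g * i z * g⁻¹)
    {lam : R → Subgroup.center K} (hlam : IsZ1R θ jb fb lam) (a b : G) :
    twist i (fb.comp π) lam (a * b) = twist i (fb.comp π) lam a * twist i (fb.comp π) lam b :=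
  (twist_mul_iff hi hact lam a b).mpr (hlam.2.2 (π a) (π b))

lemma isZ1R_of_twist {π0 : N →* P} {jb : P →* Q} {j : N →* G} (hi : Function.Injective i)
    (hact : ∀ g z, i (outCenter K (θ (π g)) z) = g * i z * g⁻¹)
    (hπ0 : Function.Surjective π0) (hfb : Function.Surjective fb) (hπ : Function.Surjective π)
    (hcomm : π.comp j = jb.comp π0) (hjφ : ∀ n, fb (π (j n)) = 1)
    {lam : R → Subgroup.center K}
    (hmul : ∀ a b, twist i (fb.comp π) lam (a * b) =
      twist i (fb.comp π) lam a * twist i (fb.comp π) lam b)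
    (hfix : ∀ n, twist i (fb.comp π) lam (j n) = j n) :
    IsZ1R θ jb fb lam := by
  refine ⟨?_, fun r p => ?_, fun q₁ q₂ => ?_⟩
  · have h := hfix 1
    rw [twist, MonoidHom.comp_apply, hjφ 1, map_one, mul_one] at h
    exact Subtype.ext (hi (by rw [h, OneMemClass.coe_one, map_one]))
  · obtain ⟨n, rfl⟩ := hπ0 p
    have hφj : ∀ g, fb (π (j n * g)) = fb (π g) := fun g => by
      rw [map_mul, map_mul, hjφ, one_mul]
    have hcomm_n : Commute (j n) (i (lam r)) := by
      obtain ⟨q, rfl⟩ := hfb r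
      obtain ⟨g, rfl⟩ := hπ q
      have h := hmul (j n) g
      rw [hfix] at h
      simp only [twist, MonoidHom.comp_apply, hφj, ← mul_assoc] at h
      exact (mul_right_cancel h).symm
    apply Subtype.ext (hi _)
    rw [← MonoidHom.comp_apply jb, ← hcomm, MonoidHom.comp_apply, hact, hcomm_n.eq,
      mul_inv_cancel_right]
  · obtain ⟨a, rfl⟩ := hπ q₁
    obtain ⟨b, rfl⟩ := hπ q₂
    exact (twist_mul_iff hi hact lam a b).mp (hmul a b)

lemma exists_twist_eq {i0 : K →* N} {j : N →* G} (hi : Function.Injective (j.comp i0))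
    (hkerφ : j.range = (fb.comp π).ker) (hkerπ : (j.comp i0).range = π.ker)
    (ξ : MulAut G) (hξj : ∀ n, ξ (j n) = j n) (hξπ : ∀ g, π (ξ g) = π g) :
    ∃ lam : R → Subgroup.center K, ∀ g, ξ g = twist (j.comp i0) (fb.comp π) lam g := by
  have : j.range.Normal := hkerφ ▸ (fb.comp π).normal_ker
  have hfix : ∀ m ∈ j.range, ξ m = m := by
    rintro _ ⟨n, rfl⟩
    exact hξj n
  have hdisp : ∀ g, ∃ z : Subgroup.center K, j.comp i0 z = ξ g * g⁻¹ := by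
    intro g
    obtain ⟨k, hk⟩ : ξ g * g⁻¹ ∈ (j.comp i0).range := by
      rw [hkerπ, MonoidHom.mem_ker, map_mul, map_inv, hξπ, mul_inv_cancel]
    refine ⟨⟨k, mem_center_of_commute hi fun a => ?_⟩, hk⟩
    rw [hk]
    exact commute_map_mul_inv hfix ⟨i0 a, rfl⟩ g
  choose z hz using hdisp
  have hfac : z.FactorsThrough (fb.comp π) := fun a b hab => by
    refine Subtype.ext (hi ?_)
    rw [hz, hz]
    refine map_mul_inv_eq_of_mul_inv_mem hfix ?_
    rw [hkerφ, MonoidHom.mem_ker, map_mul, map_inv, hab, mul_inv_cancel]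
  refine ⟨Function.extend (fb.comp π) z 1, fun g => ?_⟩
  rw [twist, hfac.extend_apply, hz, inv_mul_cancel_right]

end IteratedExtension

theorem statement0_general
    {K P Q R N G : Type*} [Group K] [Group P] [Group Q] [Group R] [Group N] [Group G]
    (i0 : K →* N) (π0 : N →* P) (jb : P →* Q) (fb : Q →* R)
    (j : N →* G) (π : G →* Q) (θ : Q →* Out K)
    (hi0 : Function.Injective i0) (hπ0 : Function.Surjective π0)
    (hfb : Function.Surjective fb)
    (hj : Function.Injective j) (hπ : Function.Surjective π)
    (hcomm : π.comp j = jb.comp π0)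
    (hkerφ : j.range = (fb.comp π).ker)
    (hkerπ : (j.comp i0).range = π.ker)
    (hθ : ∀ (g : G) (κ : MulAut K),
      (∀ k, (j.comp i0) (κ k) = g * (j.comp i0) k * g⁻¹) → θ (π g) = toOut K κ) :
    -- well-definedness: each cocycle gives an automorphism of the iterated extension
    (∀ lam : R → ↥(Subgroup.center K), IsZ1R θ jb fb lam →
      ∃ ξ : MulAut G, (∀ g : G, ξ g = (j.comp i0) (lam (fb (π g)) : K) * g) ∧
        (∀ n, ξ (j n) = j n) ∧ (∀ g, π (ξ g) = π g)) ∧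
    -- injectivity
    (∀ lam1 lam2 : R → ↥(Subgroup.center K), IsZ1R θ jb fb lam1 → IsZ1R θ jb fb lam2 →
      (∀ g : G, (j.comp i0) (lam1 (fb (π g)) : K) * g = (j.comp i0) (lam2 (fb (π g)) : K) * g) →
      lam1 = lam2) ∧
    -- the map is a homomorphism: pointwise products of cocycles are cocycles and are
    -- sent to composites
    (∀ lam1 lam2 : R → ↥(Subgroup.center K), IsZ1R θ jb fb lam1 → IsZ1R θ jb fb lam2 →
      IsZ1R θ jb fb (fun r => lam1 r * lam2 r) ∧
      ∀ g : G, (j.comp i0) ((fun r => lam1 r * lam2 r) (fb (π g)) : K) * g =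
        (j.comp i0) (lam1 (fb (π ((j.comp i0) (lam2 (fb (π g)) : K) * g))) : K) *
          ((j.comp i0) (lam2 (fb (π g)) : K) * g)) ∧
    -- surjectivity onto Aut(KNGQR)
    (∀ ξ : MulAut G, (∀ n, ξ (j n) = j n) → (∀ g, π (ξ g) = π g) →
      ∃ lam : R → ↥(Subgroup.center K), IsZ1R θ jb fb lam ∧
        ∀ g : G, ξ g = (j.comp i0) (lam (fb (π g)) : K) * g) ∧
    -- inverse formula, via any section u of φ with u 1 = 1
    (∀ u : R → G, (∀ r, fb (π (u r)) = r) → u 1 = 1 →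
      ∀ (ξ : MulAut G) (lam : R → ↥(Subgroup.center K)), IsZ1R θ jb fb lam →
        (∀ g : G, ξ g = (j.comp i0) (lam (fb (π g)) : K) * g) →
        ∀ r : R, ((j.comp i0) (lam r : K) : G) = ξ (u r) * (u r)⁻¹) ∧
    -- Aut(KNGQR) is abelian
    (∀ ξ1 ξ2 : MulAut G, (∀ n, ξ1 (j n) = j n) → (∀ g, π (ξ1 g) = π g) →
      (∀ n, ξ2 (j n) = j n) → (∀ g, π (ξ2 g) = π g) → ξ1 * ξ2 = ξ2 * ξ1) := by
  have hi : Function.Injective (j.comp i0) := hj.comp hi0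
  have hπi : ∀ k, π (j.comp i0 k) = 1 := fun k => (hkerπ ▸ ⟨k, rfl⟩ : _ ∈ π.ker)
  have hφi : ∀ k, (fb.comp π) (j.comp i0 k) = 1 := fun k => by
    rw [MonoidHom.comp_apply, hπi, map_one]
  have hjφ : ∀ n, fb (π (j n)) = 1 := fun n => (hkerφ ▸ ⟨n, rfl⟩ : j n ∈ (fb.comp π).ker)
  have hact := map_outCenter_eq_conj hi hkerπ hθ
  have hsurj := exists_twist_eq hi hkerφ hkerπ
  refine ⟨fun lam hlam => ⟨twistMulEquiv hφi lam (twist_mul_of_isZ1R hi hact hlam), fun _ => rfl,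
      fun n => twist_eq_self_of_map_eq_one hlam.1 (hjφ n), map_twist π hπi lam⟩,
    fun lam₁ lam₂ _ _ h => twist_injective (φ := fb.comp π) hi (hfb.comp hπ) (funext h),
    fun lam₁ lam₂ h₁ h₂ => ⟨h₁.mul h₂, fun g => (twist_twist hφi lam₁ lam₂ g).symm⟩,
    fun ξ hξj hξπ => ?_, fun u hu _ ξ lam _ hξ r => by rw [hξ, hu, mul_inv_cancel_right],
    fun ξ₁ ξ₂ h₁j h₁π h₂j h₂π => ?_⟩
  · obtain ⟨lam, hlam⟩ := hsurj ξ hξj hξπ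
    refine ⟨lam, isZ1R_of_twist hi hact hπ0 hfb hπ hcomm hjφ (fun a b => ?_) (fun n => ?_), hlam⟩
    · rw [← hlam, ← hlam, ← hlam, map_mul]
    · rw [← hlam, hξj]
  · obtain ⟨lam₁, hlam₁⟩ := hsurj ξ₁ h₁j h₁π
    obtain ⟨lam₂, hlam₂⟩ := hsurj ξ₂ h₂j h₂π
    ext g
    simp only [MulAut.mul_apply, hlam₁, hlam₂, twist_twist hφi, mul_comm lam₁]

/-- For an iterated extension `(G,j,π)` of `(KNP)` by `(PQR)` whose
`Q`-main extension has outer action `θ`, the map `λ ↦ (g ↦ i(λ(φ g))·g)` is a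
well-defined group isomorphism `Z¹(R, Z(K)^P) ≃ Aut(KNGQR)`, with inverse given by
`ξ ↦ (r ↦ ξ(u r)·(u r)⁻¹)` for any section `u` of `φ`; in particular `Aut(KNGQR)` is
abelian. -/
theorem statement0
    {K P Q R N G : Type*} [Group K] [Group P] [Group Q] [Group R] [Group N] [Group G]
    (i0 : K →* N) (π0 : N →* P) (jb : P →* Q) (fb : Q →* R)
    (j : N →* G) (π : G →* Q) (θ : Q →* Out K)
    (hi0 : Function.Injective i0) (hπ0 : Function.Surjective π0)
    (hker0 : i0.range = π0.ker)
    (hjb : Function.Injective jb) (hfb : Function.Surjective fb)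
    (hker1 : jb.range = fb.ker)
    (hj : Function.Injective j) (hπ : Function.Surjective π)
    (hcomm : π.comp j = jb.comp π0)
    (hkerφ : j.range = (fb.comp π).ker)
    (hkerπ : (j.comp i0).range = π.ker)
    (hθ : ∀ (g : G) (κ : MulAut K),
      (∀ k, (j.comp i0) (κ k) = g * (j.comp i0) k * g⁻¹) → θ (π g) = toOut K κ) :
    -- well-definedness: each cocycle gives an automorphism of the iterated extension
    (∀ lam : R → ↥(Subgroup.center K), IsZ1R θ jb fb lam →
      ∃ ξ : MulAut G, (∀ g : G, ξ g = (j.comp i0) (lam (fb (π g)) : K) * g) ∧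
        (∀ n, ξ (j n) = j n) ∧ (∀ g, π (ξ g) = π g)) ∧
    -- injectivity
    (∀ lam1 lam2 : R → ↥(Subgroup.center K), IsZ1R θ jb fb lam1 → IsZ1R θ jb fb lam2 →
      (∀ g : G, (j.comp i0) (lam1 (fb (π g)) : K) * g = (j.comp i0) (lam2 (fb (π g)) : K) * g) →
      lam1 = lam2) ∧
    -- the map is a homomorphism: pointwise products of cocycles are cocycles and are
    -- sent to composites
    (∀ lam1 lam2 : R → ↥(Subgroup.center K), IsZ1R θ jb fb lam1 → IsZ1R θ jb fb lam2 →
      IsZ1R θ jb fb (fun r => lam1 r * lam2 r) ∧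
      ∀ g : G, (j.comp i0) ((fun r => lam1 r * lam2 r) (fb (π g)) : K) * g =
        (j.comp i0) (lam1 (fb (π ((j.comp i0) (lam2 (fb (π g)) : K) * g))) : K) *
          ((j.comp i0) (lam2 (fb (π g)) : K) * g)) ∧
    -- surjectivity onto Aut(KNGQR)
    (∀ ξ : MulAut G, (∀ n, ξ (j n) = j n) → (∀ g, π (ξ g) = π g) →
      ∃ lam : R → ↥(Subgroup.center K), IsZ1R θ jb fb lam ∧
        ∀ g : G, ξ g = (j.comp i0) (lam (fb (π g)) : K) * g) ∧
    -- inverse formula, via any section u of φ with u 1 = 1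
    (∀ u : R → G, (∀ r, fb (π (u r)) = r) → u 1 = 1 →
      ∀ (ξ : MulAut G) (lam : R → ↥(Subgroup.center K)), IsZ1R θ jb fb lam →
        (∀ g : G, ξ g = (j.comp i0) (lam (fb (π g)) : K) * g) →
        ∀ r : R, ((j.comp i0) (lam r : K) : G) = ξ (u r) * (u r)⁻¹) ∧
    -- Aut(KNGQR) is abelian
    (∀ ξ1 ξ2 : MulAut G, (∀ n, ξ1 (j n) = j n) → (∀ g, π (ξ1 g) = π g) →
      (∀ n, ξ2 (j n) = j n) → (∀ g, π (ξ2 g) = π g) → ξ1 * ξ2 = ξ2 * ξ1) :=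
  statement0_general i0 π0 jb fb j π θ hi0 hπ0 hfb hj hπ hcomm hkerφ hkerπ hθ

end IES
end

section
/- Let (G,i,π) be an extension of K by Q with outer action θ. Then the map sending λ ∈ Z^1(Q,Z(K)) to the map G → G, g ↦ i(λ(π(g)))·g, is a well-defined group isomorphism from Z^1(Q,Z(K)) onto Aut(KGQ) := { ξ ∈ Aut(G) : ξ∘i = i and π∘ξ = π }; its inverse sends ξ to the unique λ with i(λ(q)) = ξ(s(q))·s(q)⁻¹ for all q, for any section s : Q → G of π with s(1) = 1. In particular Aut(KGQ) is an abelian subgroup of Aut(G) which, via this canonical isomorphism, depends only on the extension problem (K,Q,θ) and not on the extension (G,i,π). -/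
/-!
An automorphism `ξ` of `G` acting trivially on `i(K)` and on `Q` is determined by the defect
`g ↦ ξ(g)·g⁻¹`, which lies in `i(K)` because `π ∘ ξ = π`, depends only on `π(g)` because `ξ`
fixes `i(K)`, and commutes with `i(K)` because `ξ` respects conjugation by elements of `i(K)`;
so it is `i ∘ λ ∘ π` for a map `λ : Q → Z(K)`. Multiplicativity of `g ↦ i(λ(π g))·g` is exactly
the cocycle identity, since conjugation by `g` acts on `i(Z(K))` through `θ(π g)`. The group
`Z¹(Q, Z(K))` is abelian, hence so is `Aut(KGQ)`.
-/

namespace IES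

section Conjugation

variable {K G : Type*} [Group K] [Group G] {i : K →* G}

noncomputable def conjAut (hi : Function.Injective i) [i.range.Normal] : G →* MulAut K :=
  (MulAut.congr (MonoidHom.ofInjective hi).symm).toMonoidHom.comp MulAut.conjNormal

theorem map_conjAut_apply (hi : Function.Injective i) [i.range.Normal] (g : G) (k : K) :
    i (conjAut hi g k) = g * i k * g⁻¹ := by
  simp [conjAut, MonoidHom.ofInjective_apply]

theorem coe_outCenter_toOut (κ : MulAut K) (z : Subgroup.center K) :
    (outCenter K (toOut K κ) z : K) = κ z :=
  rfl

end Conjugation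

theorem IsZ1Q.mul {K Q : Type*} [Group K] [Group Q] {θ : Q →* Out K}
    {lam1 lam2 : Q → Subgroup.center K} (h1 : IsZ1Q θ lam1) (h2 : IsZ1Q θ lam2) :
    IsZ1Q θ (fun q => lam1 q * lam2 q) := by
  open scoped IsMulCommutative in
  refine ⟨by simp only [h1.1, h2.1, one_mul], fun q1 q2 => ?_⟩
  dsimp only
  rw [h1.2, h2.2, map_mul, mul_mul_mul_comm]

section Extension

variable {K Q G : Type*} [Group K] [Group Q] [Group G] {i : K →* G} {π : G →* Q}

def IsOuterAction (i : K →* G) (π : G →* Q) (θ : Q →* Out K) : Prop :=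
  ∀ (g : G) (κ : MulAut K), (∀ k, i (κ k) = g * i k * g⁻¹) → θ (π g) = toOut K κ

theorem map_map_eq_one (hker : i.range = π.ker) (k : K) : π (i k) = 1 :=
  show i k ∈ π.ker from hker ▸ ⟨k, rfl⟩

theorem map_map_mul (hker : i.range = π.ker) (k : K) (g : G) : π (i k * g) = π g := by
  rw [map_mul, map_map_eq_one hker, one_mul]

theorem map_outCenter (hi : Function.Injective i) (hker : i.range = π.ker) {θ : Q →* Out K}
    (hθ : IsOuterAction i π θ) (g : G) (z : Subgroup.center K) :
    i (outCenter K (θ (π g)) z) = g * i z * g⁻¹ := by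
  have : i.range.Normal := hker ▸ π.normal_ker
  rw [hθ g (conjAut hi g) (map_conjAut_apply hi g), coe_outCenter_toOut, map_conjAut_apply]

section Twist

variable {θ : Q →* Out K} {lam lam1 lam2 : Q → Subgroup.center K}

theorem twist_mul (hi : Function.Injective i) (hker : i.range = π.ker)
    (hθ : IsOuterAction i π θ) (hlam : IsZ1Q θ lam) (g h : G) :
    i (lam (π (g * h))) * (g * h) = i (lam (π g)) * g * (i (lam (π h)) * h) := by
  rw [map_mul π, hlam.2, Subgroup.coe_mul, map_mul i, map_outCenter hi hker hθ]
  group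

def twistAut (hi : Function.Injective i) (hker : i.range = π.ker) (hθ : IsOuterAction i π θ)
    (hlam : IsZ1Q θ lam) : MulAut G where
  toFun g := i (lam (π g)) * g
  invFun g := (i (lam (π g)))⁻¹ * g
  left_inv g := by simp only [map_map_mul hker, inv_mul_cancel_left]
  right_inv g := by dsimp only; rw [← map_inv i, map_map_mul hker, map_inv, mul_inv_cancel_left]
  map_mul' := twist_mul hi hker hθ hlam

theorem twistAut_apply (hi : Function.Injective i) (hker : i.range = π.ker)
    (hθ : IsOuterAction i π θ) (hlam : IsZ1Q θ lam) (g : G) :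
    twistAut hi hker hθ hlam g = i (lam (π g)) * g :=
  rfl

theorem twistAut_map (hi : Function.Injective i) (hker : i.range = π.ker)
    (hθ : IsOuterAction i π θ) (hlam : IsZ1Q θ lam) (k : K) :
    twistAut hi hker hθ hlam (i k) = i k := by
  rw [twistAut_apply, map_map_eq_one hker, hlam.1, OneMemClass.coe_one, map_one, one_mul]

theorem map_twistAut (hi : Function.Injective i) (hker : i.range = π.ker)
    (hθ : IsOuterAction i π θ) (hlam : IsZ1Q θ lam) (g : G) :
    π (twistAut hi hker hθ hlam g) = π g :=
  map_map_mul hker _ g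

theorem eq_of_twist_eq (hi : Function.Injective i) (hπ : Function.Surjective π)
    (h : ∀ g, i (lam1 (π g)) * g = i (lam2 (π g)) * g) : lam1 = lam2 := by
  funext q
  obtain ⟨g, rfl⟩ := hπ q
  exact Subtype.ext (hi (mul_right_cancel (h g)))

theorem twist_mul_eq_twist_twist (hker : i.range = π.ker) (g : G) :
    i ↑(lam1 (π g) * lam2 (π g)) * g =
      i (lam1 (π (i (lam2 (π g)) * g))) * (i (lam2 (π g)) * g) := by
  rw [map_map_mul hker, Subgroup.coe_mul, map_mul, mul_assoc]

theorem mul_comm_of_eq_twist (hker : i.range = π.ker) {ξ1 ξ2 : MulAut G}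
    (h1 : ∀ g, ξ1 g = i (lam1 (π g)) * g) (h2 : ∀ g, ξ2 g = i (lam2 (π g)) * g) :
    ξ1 * ξ2 = ξ2 * ξ1 := by
  open scoped IsMulCommutative in
  ext g
  rw [MulAut.mul_apply, MulAut.mul_apply, h2, h1, h1, h2, ← twist_mul_eq_twist_twist hker,
    ← twist_mul_eq_twist_twist hker, mul_comm (lam1 (π g))]

end Twist

section AutCocycle

variable {ξ : MulAut G}

theorem mul_inv_mem_range (hker : i.range = π.ker) (hξπ : ∀ g, π (ξ g) = π g) (g : G) :
    ξ g * g⁻¹ ∈ i.range := by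
  rw [hker, MonoidHom.mem_ker, map_mul, map_inv, hξπ, mul_inv_cancel]

theorem mul_inv_eq_of_map_eq (hker : i.range = π.ker) (hξi : ∀ k, ξ (i k) = i k) {g h : G}
    (hgh : π g = π h) : ξ g * g⁻¹ = ξ h * h⁻¹ := by
  obtain ⟨k, hk⟩ : g⁻¹ * h ∈ i.range := by
    rw [hker, MonoidHom.mem_ker, map_mul, map_inv, hgh, inv_mul_cancel]
  obtain rfl : h = g * i k := by rw [hk, mul_inv_cancel_left]
  rw [map_mul, hξi, mul_inv_rev]
  group

theorem mul_inv_commute (hker : i.range = π.ker) (hξi : ∀ k, ξ (i k) = i k) (g : G) (k : K) :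
    Commute (ξ g * g⁻¹) (i k) := by
  obtain ⟨k', hk'⟩ : g⁻¹ * i k * g ∈ i.range :=
    (hker ▸ π.normal_ker).conj_mem' (i k) ⟨k, rfl⟩ g
  have hconj : (ξ g)⁻¹ * i k * ξ g = g⁻¹ * i k * g := by
    have hfix := hξi k'
    rwa [hk', map_mul, map_mul, map_inv, hξi] at hfix
  calc ξ g * g⁻¹ * i k = ξ g * (g⁻¹ * i k * g) * g⁻¹ := by group
    _ = ξ g * ((ξ g)⁻¹ * i k * ξ g) * g⁻¹ := by rw [hconj]
    _ = i k * (ξ g * g⁻¹) := by group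

theorem exists_center_map_eq (hi : Function.Injective i) (hker : i.range = π.ker)
    (hξi : ∀ k, ξ (i k) = i k) (hξπ : ∀ g, π (ξ g) = π g) (g : G) :
    ∃ z : Subgroup.center K, i z = ξ g * g⁻¹ := by
  obtain ⟨k, hk⟩ := mul_inv_mem_range hker hξπ g
  refine ⟨⟨k, Subgroup.mem_center_iff.2 fun k' => hi ?_⟩, hk⟩
  rw [map_mul, map_mul, hk]
  exact (mul_inv_commute hker hξi g k').symm.eq

/-- `Function.invFun π` plays the role of a section of `π`; the value does not depend on it. -/
noncomputable def autCocycle (i : K →* G) (π : G →* Q) (ξ : MulAut G) (q : Q) :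
    Subgroup.center K :=
  Function.invFun (fun z : Subgroup.center K => i z)
    (ξ (Function.invFun π q) * (Function.invFun π q)⁻¹)

theorem map_autCocycle (hi : Function.Injective i) (hker : i.range = π.ker)
    (hξi : ∀ k, ξ (i k) = i k) (hξπ : ∀ g, π (ξ g) = π g) (g : G) :
    i (autCocycle i π ξ (π g)) = ξ g * g⁻¹ := by
  have hs : π (Function.invFun π (π g)) = π g := Function.invFun_eq ⟨g, rfl⟩
  rw [← mul_inv_eq_of_map_eq hker hξi hs]
  exact Function.invFun_eq (exists_center_map_eq hi hker hξi hξπ _)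

theorem apply_eq_autCocycle_mul (hi : Function.Injective i) (hker : i.range = π.ker)
    (hξi : ∀ k, ξ (i k) = i k) (hξπ : ∀ g, π (ξ g) = π g) (g : G) :
    ξ g = i (autCocycle i π ξ (π g)) * g := by
  rw [map_autCocycle hi hker hξi hξπ, inv_mul_cancel_right]

theorem isZ1Q_autCocycle (hi : Function.Injective i) (hπ : Function.Surjective π)
    (hker : i.range = π.ker) {θ : Q →* Out K} (hθ : IsOuterAction i π θ)
    (hξi : ∀ k, ξ (i k) = i k) (hξπ : ∀ g, π (ξ g) = π g) : IsZ1Q θ (autCocycle i π ξ) := by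
  have hinj : Function.Injective (fun z : Subgroup.center K => i z) :=
    hi.comp Subtype.val_injective
  have hmap := map_autCocycle hi hker hξi hξπ
  refine ⟨hinj ?_, fun q1 q2 => hinj ?_⟩
  · simpa using hmap 1
  · obtain ⟨g1, rfl⟩ := hπ q1
    obtain ⟨g2, rfl⟩ := hπ q2
    dsimp only
    rw [← map_mul, Subgroup.coe_mul, map_mul i, map_outCenter hi hker hθ, hmap, hmap, hmap,
      map_mul ξ]
    group

end AutCocycle

end Extension

/-- For an extension `(G,i,π)` of `K` by `Q` with outer action `θ`,
the map `λ ↦ (g ↦ i(λ(π g))·g)` is a well-defined group isomorphism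
`Z¹(Q,Z(K)) ≃ Aut(KGQ)`, with inverse `ξ ↦ (q ↦ ξ(s q)·(s q)⁻¹)` for any section `s`
of `π`; in particular `Aut(KGQ)` is abelian. -/
theorem statement3
    {K Q G : Type*} [Group K] [Group Q] [Group G]
    (i : K →* G) (π : G →* Q) (θ : Q →* Out K)
    (hi : Function.Injective i) (hπ : Function.Surjective π)
    (hker : i.range = π.ker)
    (hθ : ∀ (g : G) (κ : MulAut K),
      (∀ k, i (κ k) = g * i k * g⁻¹) → θ (π g) = toOut K κ) :
    -- well-definedness: each cocycle gives an automorphism of the extension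
    (∀ lam : Q → ↥(Subgroup.center K), IsZ1Q θ lam →
      ∃ ξ : MulAut G, (∀ g : G, ξ g = i (lam (π g) : K) * g) ∧
        (∀ k, ξ (i k) = i k) ∧ (∀ g, π (ξ g) = π g)) ∧
    -- injectivity
    (∀ lam1 lam2 : Q → ↥(Subgroup.center K), IsZ1Q θ lam1 → IsZ1Q θ lam2 →
      (∀ g : G, i (lam1 (π g) : K) * g = i (lam2 (π g) : K) * g) → lam1 = lam2) ∧
    -- the map is a homomorphism
    (∀ lam1 lam2 : Q → ↥(Subgroup.center K), IsZ1Q θ lam1 → IsZ1Q θ lam2 →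
      IsZ1Q θ (fun q => lam1 q * lam2 q) ∧
      ∀ g : G, i ((fun q => lam1 q * lam2 q) (π g) : K) * g =
        i (lam1 (π (i (lam2 (π g) : K) * g)) : K) * (i (lam2 (π g) : K) * g)) ∧
    -- surjectivity onto Aut(KGQ)
    (∀ ξ : MulAut G, (∀ k, ξ (i k) = i k) → (∀ g, π (ξ g) = π g) →
      ∃ lam : Q → ↥(Subgroup.center K), IsZ1Q θ lam ∧
        ∀ g : G, ξ g = i (lam (π g) : K) * g) ∧
    -- inverse formula, via any section s of π with s 1 = 1
    (∀ s : Q → G, (∀ q, π (s q) = q) → s 1 = 1 →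
      ∀ (ξ : MulAut G) (lam : Q → ↥(Subgroup.center K)), IsZ1Q θ lam →
        (∀ g : G, ξ g = i (lam (π g) : K) * g) →
        ∀ q : Q, (i (lam q : K) : G) = ξ (s q) * (s q)⁻¹) ∧
    -- Aut(KGQ) is abelian
    (∀ ξ1 ξ2 : MulAut G, (∀ k, ξ1 (i k) = i k) → (∀ g, π (ξ1 g) = π g) →
      (∀ k, ξ2 (i k) = i k) → (∀ g, π (ξ2 g) = π g) → ξ1 * ξ2 = ξ2 * ξ1) := by
  have hθ' : IsOuterAction i π θ := hθ
  refine ⟨fun lam hlam => ?_, fun lam1 lam2 _ _ => eq_of_twist_eq hi hπ,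
    fun lam1 lam2 h1 h2 => ⟨h1.mul h2, twist_mul_eq_twist_twist hker⟩,
    fun ξ hξi hξπ => ⟨autCocycle i π ξ, isZ1Q_autCocycle hi hπ hker hθ' hξi hξπ,
      apply_eq_autCocycle_mul hi hker hξi hξπ⟩, ?_, ?_⟩
  · exact ⟨twistAut hi hker hθ' hlam, twistAut_apply hi hker hθ' hlam,
      twistAut_map hi hker hθ' hlam, map_twistAut hi hker hθ' hlam⟩
  · intro s hs _ ξ lam _ hξ q
    rw [hξ, hs, mul_inv_cancel_right]
  · intro ξ1 ξ2 h1i h1π h2i h2π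
    exact mul_comm_of_eq_twist hker (apply_eq_autCocycle_mul hi hker h1i h1π)
      (apply_eq_autCocycle_mul hi hker h2i h2π)

end IES
end

section
/- Let (G,j,π) be an iterated extension of (KNP) by (PQR) whose Q-main extension (G,i,π) (with i := j∘i₀) has outer action θ. An automorphism ξ ∈ Aut(KNGQR) is an inner automorphism of G induced by an element of i(Z(K)) if and only if it is an inner automorphism of G induced by an element of i(Z(K)^P). Equivalently, the homomorphism Aut(KNGQR)/𝒞_G(Z(K)^P) → Aut(KGQ)/𝒞_G(Z(K)) induced by the inclusion Aut(KNGQR) ⊆ Aut(KGQ) is injective. -/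
namespace IES

/-! If conjugation by `i(z)` fixes `j(N)` pointwise, then `i₀(z)` commutes with every `n ∈ N`.
Since `N` normalizes `i₀(K)`, conjugation by `n` is an automorphism of `K` representing
`θ(j̄(π₀ n))`, and it fixes `z`; as `π₀` is onto, `z` is `P`-fixed.
The converse is trivial. -/

section ConjOfNormalRange

variable {K N : Type*} [Group K] [Group N] {i : K →* N}

noncomputable def conjAutOfNormalRange (hi : Function.Injective i) [i.range.Normal] (n : N) :
    MulAut K :=
  (MonoidHom.ofInjective hi).trans ((MulAut.conjNormal n).trans (MonoidHom.ofInjective hi).symm)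

lemma map_conjAutOfNormalRange_apply (hi : Function.Injective i) [i.range.Normal] (n : N) (k : K) :
    i (conjAutOfNormalRange hi n k) = n * i k * n⁻¹ := by
  simp only [conjAutOfNormalRange, MulEquiv.trans_apply, MonoidHom.apply_ofInjective_symm,
    MulAut.conjNormal_apply, MonoidHom.ofInjective_apply]

lemma conjAutOfNormalRange_apply_eq_self (hi : Function.Injective i) [i.range.Normal] {n : N}
    {k : K} (h : Commute n (i k)) : conjAutOfNormalRange hi n k = k :=
  hi <| by rw [map_conjAutOfNormalRange_apply, h.eq, mul_inv_cancel_right]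

end ConjOfNormalRange

lemma outCenter_toOut_apply {K : Type*} [Group K] (κ : MulAut K) (z : Subgroup.center K) :
    (outCenter K (toOut K κ) z : K) = κ z :=
  rfl

lemma commute_of_apply_eq_self_of_forall_eq_conj {G : Type*} [Group G] {ξ : MulAut G} {c x : G}
    (hξ : ∀ g, ξ g = c * g * c⁻¹) (hx : ξ x = x) : Commute c x := by
  rw [hξ, mul_inv_eq_iff_eq_mul] at hx
  exact hx

theorem statement5_general
    {K P Q N G : Type*} [Group K] [Group P] [Group Q] [Group N] [Group G]
    (i0 : K →* N) (π0 : N →* P) (jb : P →* Q)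
    (j : N →* G) (π : G →* Q) (θ : Q →* Out K)
    (hi0 : Function.Injective i0) (hπ0 : Function.Surjective π0)
    (hker0 : i0.range = π0.ker)
    (hj : Function.Injective j)
    (hcomm : π.comp j = jb.comp π0)
    (hθ : ∀ (g : G) (κ : MulAut K),
      (∀ k, (j.comp i0) (κ k) = g * (j.comp i0) k * g⁻¹) → θ (π g) = toOut K κ) :
    ∀ ξ : MulAut G, (∀ n, ξ (j n) = j n) → (∀ g, π (ξ g) = π g) →
      ((∃ z : ↥(Subgroup.center K),
          ∀ g : G, ξ g = (j.comp i0) (z : K) * g * ((j.comp i0) (z : K))⁻¹) ↔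
       (∃ z : ↥(Subgroup.center K), (∀ p : P, outCenter K (θ (jb p)) z = z) ∧
          ∀ g : G, ξ g = (j.comp i0) (z : K) * g * ((j.comp i0) (z : K))⁻¹)) := by
  intro ξ hξN _
  refine ⟨fun ⟨z, hz⟩ => ⟨z, fun p => ?_, hz⟩, fun ⟨z, _, hz⟩ => ⟨z, hz⟩⟩
  have : i0.range.Normal := hker0 ▸ π0.normal_ker
  obtain ⟨n, rfl⟩ := hπ0 p
  have hθn : θ (jb (π0 n)) = toOut K (conjAutOfNormalRange hi0 n) := by
    rw [← MonoidHom.comp_apply jb π0, ← hcomm, MonoidHom.comp_apply]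
    refine hθ (j n) _ fun k => ?_
    simp only [MonoidHom.comp_apply, map_conjAutOfNormalRange_apply, map_mul, map_inv]
  have hzn : Commute n (i0 z) := by
    have h := (commute_of_apply_eq_self_of_forall_eq_conj hz (hξN n)).symm
    exact hj <| by simpa only [map_mul, MonoidHom.comp_apply] using h.eq
  ext
  rw [hθn, outCenter_toOut_apply]
  exact conjAutOfNormalRange_apply_eq_self hi0 hzn

/-- An automorphism of the iterated extension `(KNGQR)` is an inner
automorphism of `G` induced by an element of `i(Z(K))` iff it is an inner automorphism
induced by an element of `i(Z(K)^P)`; equivalently, the induced map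
`Aut(KNGQR)/𝒞_G(Z(K)^P) → Aut(KGQ)/𝒞_G(Z(K))` is injective. -/
theorem statement5
    {K P Q R N G : Type*} [Group K] [Group P] [Group Q] [Group R] [Group N] [Group G]
    (i0 : K →* N) (π0 : N →* P) (jb : P →* Q) (fb : Q →* R)
    (j : N →* G) (π : G →* Q) (θ : Q →* Out K)
    (hi0 : Function.Injective i0) (hπ0 : Function.Surjective π0)
    (hker0 : i0.range = π0.ker)
    (hjb : Function.Injective jb) (hfb : Function.Surjective fb)
    (hker1 : jb.range = fb.ker)
    (hj : Function.Injective j) (hπ : Function.Surjective π)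
    (hcomm : π.comp j = jb.comp π0)
    (hkerφ : j.range = (fb.comp π).ker)
    (hkerπ : (j.comp i0).range = π.ker)
    (hθ : ∀ (g : G) (κ : MulAut K),
      (∀ k, (j.comp i0) (κ k) = g * (j.comp i0) k * g⁻¹) → θ (π g) = toOut K κ) :
    ∀ ξ : MulAut G, (∀ n, ξ (j n) = j n) → (∀ g, π (ξ g) = π g) →
      ((∃ z : ↥(Subgroup.center K),
          ∀ g : G, ξ g = (j.comp i0) (z : K) * g * ((j.comp i0) (z : K))⁻¹) ↔
       (∃ z : ↥(Subgroup.center K), (∀ p : P, outCenter K (θ (jb p)) z = z) ∧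
          ∀ g : G, ξ g = (j.comp i0) (z : K) * g * ((j.comp i0) (z : K))⁻¹)) :=
  statement5_general i0 π0 jb j π θ hi0 hπ0 hker0 hj hcomm hθ

end IES
end

section
/- Suppose (KNP,PQR,Θ) is an iterated extension problem. Then the canonical group isomorphism Z^1(P,Z(K)) ≅ Aut(KNP), λ ↦ (n ↦ i₀(λ(π₀(n)))·n), is Q-equivariant: for any q ∈ Q and any lift Σ(q) ∈ Aut_K(N) of Θ(q) ∈ Out(N;K), if λ ∈ Z^1(P,Z(K)) corresponds to η ∈ Aut(KNP), then the cocycle q·λ corresponds to Σ(q)∘η∘Σ(q)⁻¹, which again lies in Aut(KNP) and is independent of the choice of the lift Σ(q). -/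
/-!
A lift `Σ` of `Θ(q)` maps `i₀(K)` to itself by an automorphism `κ` representing `θ(q)`, and
covers conjugation by `q` on `P`. Hence `Σ∘η∘Σ⁻¹` multiplies `n` by
`i₀(κ(λ(π₀(Σ⁻¹ n)))) = i₀((q·λ)(π₀ n))`, and `q·λ` is a cocycle because `θ` is a
homomorphism and `j̄(P)` is normal.
Two lifts differ by conjugation by some `i₀(k)`, which commutes with `η` since `λ` takes
central values and `π₀ ∘ i₀ = 1`.
-/

namespace IES

lemma apply_apply_eq_of_mul_eq {G A : Type*} [Group G] [Group A] (ρ : G →* MulAut A)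
    {g a b : G} (h : g * a = b * g) (x : A) : ρ g (ρ a x) = ρ b (ρ g x) := by
  simpa only [map_mul, MulAut.mul_apply] using congrArg (fun u => ρ u x) h

section AutK

variable {K N : Type*} [Group K] [Group N] {i0 : K →* N}

lemma exists_mulAut_restrict (hi0 : Function.Injective i0) (σ : autK i0) :
    ∃ κ : MulAut K, ∀ k, i0 (κ k) = (σ : MulAut N) (i0 k) := by
  choose f hf using fun k => (σ.2 (i0 k)).mpr ⟨k, rfl⟩
  choose g hg using fun k => ((σ⁻¹).2 (i0 k)).mpr ⟨k, rfl⟩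
  refine ⟨MulEquiv.mk' ⟨f, g, fun k => hi0 ?_, fun k => hi0 ?_⟩ fun a b => hi0 ?_, hf⟩
  · simp [hf, hg]
  · simp [hf, hg]
  · simp [hf]

lemma conj_apply_i0_of_apply_i0 {η : MulAut N} (hη : ∀ k, η (i0 k) = i0 k) (σ : autK i0) (k : K) :
    ((σ : MulAut N) * η * (σ : MulAut N)⁻¹) (i0 k) = i0 k := by
  obtain ⟨k', hk'⟩ := ((σ⁻¹).2 (i0 k)).mpr ⟨k, rfl⟩
  simp only [MulAut.mul_apply]
  rw [← Subgroup.coe_inv, ← hk', hη, hk', Subgroup.coe_inv, MulAut.apply_inv_self]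

lemma exists_eq_mul_conj_of_mkNK_eq {σ τ : autK i0} (h : mkNK i0 σ = mkNK i0 τ) :
    ∃ k, (τ : MulAut N) = σ * MulAut.conj (i0 k) := by
  obtain ⟨c, ⟨k, hk⟩, rfl⟩ := (QuotientGroup.mk'_eq_mk' (cInn i0)).mp h
  exact ⟨k, by rw [Subgroup.coe_mul, hk]⟩

lemma conj_eq_of_mkNK_eq {η : MulAut N} (hη : ∀ k, Commute η (MulAut.conj (i0 k)))
    {σ τ : autK i0} (h : mkNK i0 σ = mkNK i0 τ) :
    (σ : MulAut N) * η * (σ : MulAut N)⁻¹ = (τ : MulAut N) * η * (τ : MulAut N)⁻¹ := by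
  obtain ⟨k, hk⟩ := exists_eq_mul_conj_of_mkNK_eq h
  rw [hk, mul_inv_rev, mul_assoc (σ : MulAut N) (MulAut.conj _) η, ← (hη k).eq]
  group

end AutK

section CocycleAut

variable {K N P : Type*} [Group K] [Group N] [Group P] {i0 : K →* N} {π0 : N →* P}
  {lam : P → Subgroup.center K} {η : MulAut N}

lemma apply_i0_of_eq_mul (hπi : ∀ k, π0 (i0 k) = 1) (hlam : lam 1 = 1)
    (hη : ∀ n, η n = i0 (lam (π0 n) : K) * n) (k : K) : η (i0 k) = i0 k := by
  rw [hη, hπi, hlam, OneMemClass.coe_one, map_one, one_mul]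

lemma π0_apply_of_eq_mul (hπi : ∀ k, π0 (i0 k) = 1)
    (hη : ∀ n, η n = i0 (lam (π0 n) : K) * n) (n : N) : π0 (η n) = π0 n := by
  rw [hη, map_mul, hπi, one_mul]

lemma commute_conj_i0_of_eq_mul (hπi : ∀ k, π0 (i0 k) = 1)
    (hη : ∀ n, η n = i0 (lam (π0 n) : K) * n) (k : K) : Commute η (MulAut.conj (i0 k)) := by
  ext n
  have hcomm : i0 k * i0 (lam (π0 n) : K) = i0 (lam (π0 n) : K) * i0 k := by
    rw [← map_mul, ← map_mul, Subgroup.mem_center_iff.mp (lam (π0 n)).2 k]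
  simp only [MulAut.mul_apply, MulAut.conj_apply, hη, map_mul, map_inv, hπi, inv_one,
    mul_one, one_mul]
  rw [← mul_assoc, ← mul_assoc, hcomm]
  group

end CocycleAut

section Equivariance

variable {K P Q : Type*} [Group K] [Group P] [Group Q] {θ : Q →* Out K} {jb : P →* Q}

lemma isZ1P_conj {lam lam' : P → Subgroup.center K} (hN : jb.range.Normal) (q : Q)
    (hlam : IsZ1P θ jb lam)
    (hlam' : ∀ p p', jb p' = q⁻¹ * jb p * q → lam' p = outCenter K (θ q) (lam p')) :
    IsZ1P θ jb lam' := by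
  have hconj (p : P) : ∃ p', jb p' = q⁻¹ * jb p * q := hN.conj_mem' _ ⟨p, rfl⟩ q
  constructor
  · rw [hlam' 1 1 (by simp), hlam.1, map_one]
  · intro p1 p2
    obtain ⟨p1', h1⟩ := hconj p1
    obtain ⟨p2', h2⟩ := hconj p2
    have h12 : jb (p1' * p2') = q⁻¹ * jb (p1 * p2) * q := by simp only [map_mul, h1, h2]; group
    have hact : q * jb p1' = jb p1 * q := by rw [h1]; group
    rw [hlam' _ _ h12, hlam' _ _ h1, hlam' _ _ h2, hlam.2, map_mul]
    exact congrArg _ (apply_apply_eq_of_mul_eq ((outCenter K).comp θ) hact (lam p2'))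

end Equivariance

lemma apply_inv_apply_eq_conj_inv {N Q : Type*} [Group N] [Group Q] {f : N → Q}
    {σ : MulAut N} {q : Q} (hσ : ∀ n, f (σ n) = q * f n * q⁻¹) (n : N) :
    f (σ⁻¹ n) = q⁻¹ * f n * q := by
  rw [← MulAut.apply_inv_self N σ n, hσ, MulAut.inv_apply_self]
  group

theorem statement7_general
    {K P Q R N : Type*} [Group K] [Group P] [Group Q] [Group R] [Group N]
    (i0 : K →* N) (π0 : N →* P) (jb : P →* Q) (fb : Q →* R) (θ : Q →* Out K)
    (hi0 : Function.Injective i0)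
    (hker0 : i0.range = π0.ker)
    (hjb : Function.Injective jb)
    (hker1 : jb.range = fb.ker)
    -- Θ is a (θ,𝒞_P^Q)-prolongation of Θ_P
    (Θ : Q →* OutNK i0)
    (hΘK : ∀ (q : Q) (ν : ↥(autK i0)) (κ : MulAut K), mkNK i0 ν = Θ q →
      (∀ k, i0 (κ k) = (ν : MulAut N) (i0 k)) → θ q = toOut K κ)
    (hΘconjP : ∀ (q : Q) (ν : ↥(autK i0)), mkNK i0 ν = Θ q →
      ∀ n : N, jb (π0 ((ν : MulAut N) n)) = q * jb (π0 n) * q⁻¹)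
    -- a 1-cocycle λ and the corresponding automorphism η ∈ Aut(KNP)
    (lam : P → ↥(Subgroup.center K)) (hlam : IsZ1P θ jb lam)
    (η : MulAut N) (hη : ∀ n : N, η n = i0 (lam (π0 n) : K) * n) :
    ∀ (q : Q) (Sa : ↥(autK i0)), mkNK i0 Sa = Θ q →
      -- Σ∘η∘Σ⁻¹ again lies in Aut(KNP)
      (∀ k : K, ((Sa : MulAut N) * η * (Sa : MulAut N)⁻¹) (i0 k) = i0 k) ∧
      (∀ n : N, π0 (((Sa : MulAut N) * η * (Sa : MulAut N)⁻¹) n) = π0 n) ∧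
      -- the transformed cocycle q·λ is again a 1-cocycle
      (∀ lam' : P → ↥(Subgroup.center K),
        (∀ p p' : P, jb p' = q⁻¹ * jb p * q →
          lam' p = outCenter K (θ q) (lam p')) → IsZ1P θ jb lam') ∧
      -- Σ∘η∘Σ⁻¹ corresponds to q·λ
      (∀ (n : N) (p' : P), jb p' = q⁻¹ * jb (π0 n) * q →
        ((Sa : MulAut N) * η * (Sa : MulAut N)⁻¹) n =
          i0 (outCenter K (θ q) (lam p') : K) * n) ∧
      -- independence of the choice of the lift of Θ(q)
      (∀ Sb : ↥(autK i0), mkNK i0 Sb = Θ q →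
        (Sa : MulAut N) * η * (Sa : MulAut N)⁻¹ =
          (Sb : MulAut N) * η * (Sb : MulAut N)⁻¹) := by
  intro q Sa hSa
  have hπi (k : K) : π0 (i0 k) = 1 := hker0.le ⟨k, rfl⟩
  have hSaP := hΘconjP q Sa hSa
  obtain ⟨κ, hκ⟩ := exists_mulAut_restrict hi0 Sa
  refine ⟨conj_apply_i0_of_apply_i0 (apply_i0_of_eq_mul hπi hlam.1 hη) Sa, fun n => hjb ?_,
    fun _ => isZ1P_conj (hker1 ▸ fb.normal_ker) q hlam, fun n p' hp' => ?_,
    fun Sb hSb => conj_eq_of_mkNK_eq (commute_conj_i0_of_eq_mul hπi hη) (hSa.trans hSb.symm)⟩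
  · simp only [MulAut.mul_apply]
    rw [hSaP, π0_apply_of_eq_mul hπi hη, apply_inv_apply_eq_conj_inv (f := fun n => jb (π0 n)) hSaP]
    group
  · have hp : π0 ((Sa : MulAut N)⁻¹ n) = p' := hjb (by rw [apply_inv_apply_eq_conj_inv (f := fun n => jb (π0 n)) hSaP, hp'])
    simp only [MulAut.mul_apply]
    rw [hη, hp, map_mul, MulAut.apply_inv_self, ← hκ, hΘK q Sa κ hSa hκ, outCenter_toOut_apply]

/-- For an iterated extension problem `(KNP,PQR,Θ)`, the canonical
isomorphism `Z¹(P,Z(K)) ≃ Aut(KNP)`, `λ ↦ (n ↦ i₀(λ(π₀ n))·n)`, is `Q`-equivariant: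
if `λ` corresponds to `η`, then for any `q ∈ Q` and any lift `Σ` of `Θ(q)`, the
automorphism `Σ∘η∘Σ⁻¹` lies again in `Aut(KNP)`, is independent of the choice of the
lift, and corresponds to the cocycle `q·λ`. -/
theorem statement7
    {K P Q R N : Type*} [Group K] [Group P] [Group Q] [Group R] [Group N]
    (i0 : K →* N) (π0 : N →* P) (jb : P →* Q) (fb : Q →* R) (θ : Q →* Out K)
    (hi0 : Function.Injective i0) (hπ0 : Function.Surjective π0)
    (hker0 : i0.range = π0.ker)
    (hjb : Function.Injective jb) (hfb : Function.Surjective fb)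
    (hker1 : jb.range = fb.ker)
    -- the extension (KNP) has outer action θ∘j̄
    (hθN : ∀ (n : N) (κ : MulAut K),
      (∀ k, i0 (κ k) = n * i0 k * n⁻¹) → θ (jb (π0 n)) = toOut K κ)
    -- the mod-K outer action Θ_P of (KNP)
    (ΘP : P →* OutNK i0)
    (hΘP : ∀ (n : N) (ν : ↥(autK i0)),
      (∀ m : N, (ν : MulAut N) m = n * m * n⁻¹) → ΘP (π0 n) = mkNK i0 ν)
    -- Θ is a (θ,𝒞_P^Q)-prolongation of Θ_P
    (Θ : Q →* OutNK i0)
    (hΘjb : ∀ p : P, Θ (jb p) = ΘP p)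
    (hΘK : ∀ (q : Q) (ν : ↥(autK i0)) (κ : MulAut K), mkNK i0 ν = Θ q →
      (∀ k, i0 (κ k) = (ν : MulAut N) (i0 k)) → θ q = toOut K κ)
    (hΘconjP : ∀ (q : Q) (ν : ↥(autK i0)), mkNK i0 ν = Θ q →
      ∀ n : N, jb (π0 ((ν : MulAut N) n)) = q * jb (π0 n) * q⁻¹)
    -- a 1-cocycle λ and the corresponding automorphism η ∈ Aut(KNP)
    (lam : P → ↥(Subgroup.center K)) (hlam : IsZ1P θ jb lam)
    (η : MulAut N) (hη : ∀ n : N, η n = i0 (lam (π0 n) : K) * n) :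
    ∀ (q : Q) (Sa : ↥(autK i0)), mkNK i0 Sa = Θ q →
      -- Σ∘η∘Σ⁻¹ again lies in Aut(KNP)
      (∀ k : K, ((Sa : MulAut N) * η * (Sa : MulAut N)⁻¹) (i0 k) = i0 k) ∧
      (∀ n : N, π0 (((Sa : MulAut N) * η * (Sa : MulAut N)⁻¹) n) = π0 n) ∧
      -- the transformed cocycle q·λ is again a 1-cocycle
      (∀ lam' : P → ↥(Subgroup.center K),
        (∀ p p' : P, jb p' = q⁻¹ * jb p * q →
          lam' p = outCenter K (θ q) (lam p')) → IsZ1P θ jb lam') ∧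
      -- Σ∘η∘Σ⁻¹ corresponds to q·λ
      (∀ (n : N) (p' : P), jb p' = q⁻¹ * jb (π0 n) * q →
        ((Sa : MulAut N) * η * (Sa : MulAut N)⁻¹) n =
          i0 (outCenter K (θ q) (lam p') : K) * n) ∧
      -- independence of the choice of the lift of Θ(q)
      (∀ Sb : ↥(autK i0), mkNK i0 Sb = Θ q →
        (Sa : MulAut N) * η * (Sa : MulAut N)⁻¹ =
          (Sb : MulAut N) * η * (Sb : MulAut N)⁻¹) :=
  statement7_general i0 π0 jb fb θ hi0 hker0 hjb hker1 Θ hΘK hΘconjP lam hlam η hη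

end IES
end

section
/- Suppose (KNP,PQR,Θ) is an iterated extension problem. Then the canonical isomorphism H^1(P,Z(K)) ≅ Out(KNP;K) (induced by λ ↦ (n ↦ i₀(λ(π₀(n)))·n), where Out(KNP;K) is the image of Aut(KNP) in Out(N;K)) restricts to a group isomorphism from the R-fixed subgroup H^1(P,Z(K))^R onto Out_Θ(KNP;K), the subgroup of Θ-compatible classes. -/
/-!
A normalized 1-cocycle `λ : P → Z(K)` acts on `N` by the twist `n ↦ i₀(λ(π₀ n)) · n`. Since
conjugation by `n` induces `θ(π₀ n)` on `Z(K)`, the cocycle identity is exactly multiplicativity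
of the twist, and the twist is conjugation by an element of `K` exactly when `λ` is a coboundary;
this gives the injective homomorphism `H¹(P, Z(K)) → Out(N; K)`. If `ν` represents `Θ(q)`, then
`ν η ν⁻¹` is the twist by `q · λ`, so the class of `η` commutes with `Θ(q)` iff `(q · λ) λ⁻¹` is a
coboundary, i.e. iff `[λ]` is fixed by `q`. Conversely, an automorphism fixing `i₀(K)` pointwise
and inducing the identity on `P` is `n ↦ (η n n⁻¹) · n`, where `η n n⁻¹` is central and depends
only on `π₀ n`.
-/

namespace IES

instance (K : Type*) [Group K] : CommGroup (Subgroup.center K) where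
  mul_comm := mul_comm'

section Extension

variable {K N P : Type*} [Group K] [Group N] [Group P] {i0 : K →* N} {π0 : N →* P}

lemma map_i0_eq_one (hker0 : i0.range = π0.ker) (k : K) : π0 (i0 k) = 1 := by
  rw [← MonoidHom.mem_ker, ← hker0]
  exact ⟨k, rfl⟩

lemma exists_i0_eq_of_map_eq_one (hker0 : i0.range = π0.ker) {m : N} (hm : π0 m = 1) :
    ∃ k, i0 k = m := by
  rwa [← MonoidHom.mem_range, hker0]

lemma conj_mem_autK (hker0 : i0.range = π0.ker) (n : N) : MulAut.conj n ∈ autK i0 := by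
  intro m
  simp [hker0]

lemma exists_mulAut_i0_comp (hi0 : Function.Injective i0) {e : MulAut N} (he : e ∈ autK i0) :
    ∃ κ : MulAut K, ∀ k, i0 (κ k) = e (i0 k) := by
  have hmap : i0.range.map e.toMonoidHom = i0.range := by
    ext m
    rw [Subgroup.mem_map_equiv, ← he, MulEquiv.apply_symm_apply]
  exact ⟨(((MonoidHom.ofInjective hi0).trans (e.subgroupMap i0.range)).trans
    (MulEquiv.subgroupCongr hmap)).trans (MonoidHom.ofInjective hi0).symm,
    fun k => MonoidHom.apply_ofInjective_symm hi0 _⟩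

end Extension

section OuterAction

variable {K N P Q : Type*} [Group K] [Group N] [Group P] [Group Q]
  {i0 : K →* N} {π0 : N →* P} {jb : P →* Q} {θ : Q →* Out K}

lemma i0_outCenter_eq_conj (hi0 : Function.Injective i0) (hker0 : i0.range = π0.ker)
    (hθN : ∀ (n : N) (κ : MulAut K),
      (∀ k, i0 (κ k) = n * i0 k * n⁻¹) → θ (jb (π0 n)) = toOut K κ)
    (n : N) (z : Subgroup.center K) :
    i0 (outCenter K (θ (jb (π0 n))) z : K) = n * i0 z * n⁻¹ := by
  obtain ⟨κ, hκ⟩ := exists_mulAut_i0_comp hi0 (conj_mem_autK hker0 n)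
  rw [hθN n κ hκ]
  exact hκ z

lemma i0_outCenter_eq_of_mkNK_eq (hi0 : Function.Injective i0) {Θ : Q →* OutNK i0}
    (hΘK : ∀ (q : Q) (ν : ↥(autK i0)) (κ : MulAut K), mkNK i0 ν = Θ q →
      (∀ k, i0 (κ k) = (ν : MulAut N) (i0 k)) → θ q = toOut K κ)
    {q : Q} {ν : autK i0} (hν : mkNK i0 ν = Θ q) (z : Subgroup.center K) :
    i0 (outCenter K (θ q) z : K) = (ν : MulAut N) (i0 z) := by
  obtain ⟨κ, hκ⟩ := exists_mulAut_i0_comp hi0 ν.2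
  rw [hΘK q ν κ hν hκ]
  exact hκ z

end OuterAction

section Twist

variable {K N P : Type*} [Group K] [Group N] [Group P] {i0 : K →* N} {π0 : N →* P}

def IsTwist (i0 : K →* N) (π0 : N →* P) (lam : P → Subgroup.center K) (η : MulAut N) : Prop :=
  ∀ n, η n = i0 (lam (π0 n) : K) * n

namespace IsTwist

variable {lam lam' : P → Subgroup.center K} {η η' : MulAut N}

lemma mul (hker0 : i0.range = π0.ker) (h : IsTwist i0 π0 lam η) (h' : IsTwist i0 π0 lam' η') :
    IsTwist i0 π0 (lam * lam') (η * η') := by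
  intro n
  rw [MulAut.mul_apply, h', h, map_mul, map_i0_eq_one hker0, one_mul, Pi.mul_apply,
    Subgroup.coe_mul, map_mul, mul_assoc]

lemma inv (hker0 : i0.range = π0.ker) (h : IsTwist i0 π0 lam η) :
    IsTwist i0 π0 lam⁻¹ η⁻¹ := by
  intro n
  rw [MulAut.inv_apply, MulEquiv.symm_apply_eq, h, map_mul, map_i0_eq_one hker0, one_mul,
    Pi.inv_apply, InvMemClass.coe_inv, map_inv, mul_inv_cancel_left]

lemma conj {ν : MulAut N} {κ : Subgroup.center K → Subgroup.center K} {σ : P → P}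
    (hκ : ∀ z, i0 (κ z : K) = ν (i0 z)) (hσ : ∀ n, π0 (ν⁻¹ n) = σ (π0 n))
    (h : IsTwist i0 π0 lam η) : IsTwist i0 π0 (fun p => κ (lam (σ p))) (ν * η * ν⁻¹) := by
  intro n
  rw [MulAut.mul_apply, MulAut.mul_apply, h, hσ, map_mul, MulAut.apply_inv_self, hκ]

end IsTwist

lemma exists_isTwist_of_forall_fix (hi0 : Function.Injective i0) (hπ0 : Function.Surjective π0)
    (hker0 : i0.range = π0.ker) {η : MulAut N} (hfix : ∀ k, η (i0 k) = i0 k)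
    (hproj : ∀ n, π0 (η n) = π0 n) : ∃ lam, IsTwist i0 π0 lam η := by
  have hd : ∀ n, ∃ k, i0 k = η n * n⁻¹ := fun n =>
    exists_i0_eq_of_map_eq_one hker0 (by rw [map_mul, map_inv, hproj, mul_inv_cancel])
  choose d hd using hd
  have hηd : ∀ n, η n = i0 (d n) * n := fun n => by rw [hd, inv_mul_cancel_right]
  have hcomm : ∀ n k, i0 (d n) * i0 k = i0 k * i0 (d n) := by
    intro n k
    obtain ⟨k', hk'⟩ := exists_i0_eq_of_map_eq_one hker0 (m := n⁻¹ * i0 k * n)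
      (by rw [map_mul, map_mul, map_i0_eq_one hker0, mul_one, map_inv, inv_mul_cancel])
    calc i0 (d n) * i0 k = i0 (d n) * (n * (n⁻¹ * i0 k * n) * n⁻¹) := by group
      _ = i0 (d n) * (n * η (n⁻¹ * i0 k * n) * n⁻¹) := by rw [← hk', hfix]
      _ = i0 k * i0 (d n) := by rw [map_mul, map_mul, map_inv, hfix, hηd]; group
  have hcenter : ∀ n, d n ∈ Subgroup.center K := fun n =>
    Subgroup.mem_center_iff.mpr fun k => hi0 (by rw [map_mul, map_mul, hcomm])
  have hdπ : ∀ m n, π0 m = π0 n → d m = d n := by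
    intro m n hmn
    obtain ⟨a, ha⟩ := exists_i0_eq_of_map_eq_one hker0 (m := m * n⁻¹)
      (by rw [map_mul, map_inv, hmn, mul_inv_cancel])
    apply hi0
    have hm : m = i0 a * n := by rw [ha, inv_mul_cancel_right]
    rw [hd m, hm, map_mul, hfix, hηd, ← mul_assoc, ← hcomm]
    group
  refine ⟨fun p => ⟨d (Function.surjInv hπ0 p), hcenter _⟩, fun n => ?_⟩
  change η n = i0 (d (Function.surjInv hπ0 (π0 n))) * n
  rw [hηd, hdπ _ _ (Function.surjInv_eq hπ0 (π0 n))]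

end Twist

section Coboundary

variable {K N P Q : Type*} [Group K] [Group N] [Group P] [Group Q]
  {i0 : K →* N} {π0 : N →* P} {jb : P →* Q} {θ : Q →* Out K}

def IsB1P (θ : Q →* Out K) (jb : P →* Q) (w : P → Subgroup.center K) : Prop :=
  ∃ z, ∀ p, w p = z⁻¹ * outCenter K (θ (jb p)) z

lemma IsTwist.mem_cInn_iff (hi0 : Function.Injective i0) (hπ0 : Function.Surjective π0)
    (hker0 : i0.range = π0.ker)
    (hconj : ∀ n z, i0 (outCenter K (θ (jb (π0 n))) z : K) = n * i0 z * n⁻¹)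
    {w : P → Subgroup.center K} (hw1 : w 1 = 1) {η : autK i0} (hη : IsTwist i0 π0 w η) :
    η ∈ cInn i0 ↔ IsB1P θ jb w := by
  constructor
  · rintro ⟨k, hk⟩
    have hconjk : ∀ n, i0 (w (π0 n)) * n = i0 k * n * (i0 k)⁻¹ := fun n => by
      rw [← hη, hk, MulAut.conj_apply]
    have hkc : k ∈ Subgroup.center K := by
      refine Subgroup.mem_center_iff.mpr fun g => hi0 ?_
      have := hconjk (i0 g)
      rw [map_i0_eq_one hker0, hw1, OneMemClass.coe_one, map_one, one_mul] at this
      rw [map_mul, map_mul]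
      conv_lhs => rw [this]
      group
    refine ⟨⟨k, hkc⟩⁻¹, fun p => ?_⟩
    obtain ⟨n, rfl⟩ := hπ0 p
    apply Subtype.ext
    apply hi0
    rw [inv_inv, Subgroup.coe_mul, map_mul, hconj, InvMemClass.coe_inv, map_inv,
      eq_mul_inv_of_mul_eq (hconjk n)]
    group
  · rintro ⟨z, hz⟩
    refine ⟨(z⁻¹ : Subgroup.center K), MulEquiv.ext fun n => ?_⟩
    rw [hη, hz, Subgroup.coe_mul, map_mul, hconj, MulAut.conj_apply, InvMemClass.coe_inv, map_inv]
    group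

end Coboundary

section Cocycle

variable {K N P Q : Type*} [Group K] [Group N] [Group P] [Group Q]
  {i0 : K →* N} {π0 : N →* P} {jb : P →* Q} {θ : Q →* Out K} {lam : P → Subgroup.center K}

lemma twist_mul_twist
    (hconj : ∀ n z, i0 (outCenter K (θ (jb (π0 n))) z : K) = n * i0 z * n⁻¹) (m n : N) :
    i0 (lam (π0 m) : K) * m * (i0 (lam (π0 n) : K) * n) =
      i0 ((lam (π0 m) * outCenter K (θ (jb (π0 m))) (lam (π0 n)) : Subgroup.center K) : K) *
        (m * n) := by
  rw [Subgroup.coe_mul, map_mul, hconj]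
  group

lemma exists_isTwist_of_isZ1P (hker0 : i0.range = π0.ker)
    (hconj : ∀ n z, i0 (outCenter K (θ (jb (π0 n))) z : K) = n * i0 z * n⁻¹)
    (hlam : IsZ1P θ jb lam) : ∃ η : autK i0, IsTwist i0 π0 lam η := by
  have hπ : ∀ (z : Subgroup.center K) n, π0 (i0 (z : K) * n) = π0 n := fun z n => by
    rw [map_mul, map_i0_eq_one hker0, one_mul]
  let e : N ≃ N :=
    { toFun := fun n => i0 (lam (π0 n) : K) * n
      invFun := fun n => i0 ((lam (π0 n))⁻¹ : Subgroup.center K) * n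
      left_inv := fun n => by
        simp only [hπ]
        rw [InvMemClass.coe_inv, map_inv, inv_mul_cancel_left]
      right_inv := fun n => by
        simp only [hπ]
        rw [InvMemClass.coe_inv, map_inv, mul_inv_cancel_left] }
  refine ⟨⟨MulEquiv.mk' e fun m n => ?_, fun n => Subgroup.mul_mem_cancel_left _ ⟨_, rfl⟩⟩,
    fun n => rfl⟩
  change i0 (lam (π0 (m * n)) : K) * (m * n) =
    i0 (lam (π0 m) : K) * m * (i0 (lam (π0 n) : K) * n)
  rw [twist_mul_twist hconj, map_mul, hlam.2]

lemma IsTwist.isZ1P (hi0 : Function.Injective i0) (hπ0 : Function.Surjective π0)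
    (hconj : ∀ n z, i0 (outCenter K (θ (jb (π0 n))) z : K) = n * i0 z * n⁻¹)
    {η : MulAut N} (h : IsTwist i0 π0 lam η) : IsZ1P θ jb lam := by
  refine ⟨Subtype.ext (hi0 ?_), fun p1 p2 => ?_⟩
  · simpa using (h 1).symm
  obtain ⟨m, rfl⟩ := hπ0 p1
  obtain ⟨n, rfl⟩ := hπ0 p2
  refine Subtype.ext (hi0 (mul_right_cancel (b := m * n) ?_))
  rw [← twist_mul_twist hconj, ← map_mul, ← h, map_mul, h, h]

end Cocycle

section Classes

variable {K N P Q : Type*} [Group K] [Group N] [Group P] [Group Q]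
  {i0 : K →* N} {π0 : N →* P} {jb : P →* Q} {θ : Q →* Out K}

lemma mkNK_eq_mkNK_iff (hi0 : Function.Injective i0) (hπ0 : Function.Surjective π0)
    (hker0 : i0.range = π0.ker)
    (hconj : ∀ n z, i0 (outCenter K (θ (jb (π0 n))) z : K) = n * i0 z * n⁻¹)
    {lam1 lam2 : P → Subgroup.center K} (hlam1 : lam1 1 = 1) (hlam2 : lam2 1 = 1)
    {η1 η2 : autK i0} (h1 : IsTwist i0 π0 lam1 η1) (h2 : IsTwist i0 π0 lam2 η2) :
    mkNK i0 η1 = mkNK i0 η2 ↔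
      ∃ z0 : Subgroup.center K, ∀ p, lam2 p = z0⁻¹ * outCenter K (θ (jb p)) z0 * lam1 p := by
  have hw1 : (lam1⁻¹ * lam2) 1 = 1 := by simp [hlam1, hlam2]
  rw [mkNK, QuotientGroup.mk'_apply, QuotientGroup.mk'_apply, QuotientGroup.eq,
    IsTwist.mem_cInn_iff (η := η1⁻¹ * η2) hi0 hπ0 hker0 hconj hw1 ((h1.inv hker0).mul hker0 h2)]
  simp only [IsB1P, Pi.mul_apply, Pi.inv_apply, inv_mul_eq_iff_eq_mul, mul_comm (lam1 _)]

lemma exists_map_inv_of_mkNK_eq (hπ0 : Function.Surjective π0) (hjb : Function.Injective jb)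
    {Θ : Q →* OutNK i0}
    (hΘconjP : ∀ (q : Q) (ν : ↥(autK i0)), mkNK i0 ν = Θ q →
      ∀ n : N, jb (π0 ((ν : MulAut N) n)) = q * jb (π0 n) * q⁻¹)
    {q : Q} {ν : autK i0} (hν : mkNK i0 ν = Θ q) :
    ∃ σ : P → P, (∀ n, π0 ((ν : MulAut N)⁻¹ n) = σ (π0 n)) ∧
      ∀ p, jb (σ p) = q⁻¹ * jb p * q := by
  have h : ∀ n, jb (π0 ((ν : MulAut N)⁻¹ n)) = q⁻¹ * jb (π0 n) * q := fun n => by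
    simpa using hΘconjP q⁻¹ ν⁻¹ (by rw [map_inv, map_inv, hν]) n
  refine ⟨fun p => π0 ((ν : MulAut N)⁻¹ (Function.surjInv hπ0 p)), fun n => hjb ?_, fun p => ?_⟩
  · rw [h, h, Function.surjInv_eq hπ0]
  · rw [h, Function.surjInv_eq hπ0]

lemma rFixed_iff_forall_commute (hi0 : Function.Injective i0) (hπ0 : Function.Surjective π0)
    (hker0 : i0.range = π0.ker) (hjb : Function.Injective jb)
    (hconj : ∀ n z, i0 (outCenter K (θ (jb (π0 n))) z : K) = n * i0 z * n⁻¹)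
    {Θ : Q →* OutNK i0}
    (hΘK : ∀ (q : Q) (ν : ↥(autK i0)) (κ : MulAut K), mkNK i0 ν = Θ q →
      (∀ k, i0 (κ k) = (ν : MulAut N) (i0 k)) → θ q = toOut K κ)
    (hΘconjP : ∀ (q : Q) (ν : ↥(autK i0)), mkNK i0 ν = Θ q →
      ∀ n : N, jb (π0 ((ν : MulAut N) n)) = q * jb (π0 n) * q⁻¹)
    {lam : P → Subgroup.center K} (hlam1 : lam 1 = 1) {η : autK i0} (hη : IsTwist i0 π0 lam η) :
    RFixed θ jb lam ↔ ∀ q : Q, Θ q * mkNK i0 η = mkNK i0 η * Θ q := by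
  refine forall_congr' fun q => ?_
  obtain ⟨ν, hν⟩ : ∃ ν, mkNK i0 ν = Θ q := QuotientGroup.mk'_surjective _ _
  obtain ⟨σ, hσ, hjσ⟩ := exists_map_inv_of_mkNK_eq hπ0 hjb hΘconjP hν
  have hσ1 : σ 1 = 1 := hjb (by rw [hjσ, map_one, mul_one, inv_mul_cancel])
  let w : P → Subgroup.center K := fun p => outCenter K (θ q) (lam (σ p)) * (lam p)⁻¹
  have hw1 : w 1 = 1 := by simp [w, hσ1, hlam1]
  have hw : IsTwist i0 π0 w (ν * η * ν⁻¹ * η⁻¹) :=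
    (hη.conj (i0_outCenter_eq_of_mkNK_eq hi0 hΘK hν) hσ).mul hker0 (hη.inv hker0)
  rw [← mul_inv_eq_iff_eq_mul, ← mul_inv_eq_one, ← hν, ← map_inv, ← map_mul, ← map_mul,
    ← map_inv, ← map_mul, mkNK, QuotientGroup.mk'_apply, QuotientGroup.eq_one_iff,
    IsTwist.mem_cInn_iff (η := ν * η * ν⁻¹ * η⁻¹) hi0 hπ0 hker0 hconj hw1 hw]
  refine exists_congr fun z => ⟨fun h p => ?_, fun h p p' hp' => ?_⟩
  · exact mul_inv_eq_iff_eq_mul.mpr (h p (σ p) (hjσ p))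
  · rw [hjb (hp'.trans (hjσ p).symm)]
    exact mul_inv_eq_iff_eq_mul.mp (h p)

end Classes

theorem statement8_general
    {K P Q N : Type*} [Group K] [Group P] [Group Q] [Group N]
    (i0 : K →* N) (π0 : N →* P) (jb : P →* Q) (θ : Q →* Out K)
    (hi0 : Function.Injective i0) (hπ0 : Function.Surjective π0)
    (hker0 : i0.range = π0.ker)
    (hjb : Function.Injective jb)
    (hθN : ∀ (n : N) (κ : MulAut K),
      (∀ k, i0 (κ k) = n * i0 k * n⁻¹) → θ (jb (π0 n)) = toOut K κ)
    (Θ : Q →* OutNK i0)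
    (hΘK : ∀ (q : Q) (ν : ↥(autK i0)) (κ : MulAut K), mkNK i0 ν = Θ q →
      (∀ k, i0 (κ k) = (ν : MulAut N) (i0 k)) → θ q = toOut K κ)
    (hΘconjP : ∀ (q : Q) (ν : ↥(autK i0)), mkNK i0 ν = Θ q →
      ∀ n : N, jb (π0 ((ν : MulAut N) n)) = q * jb (π0 n) * q⁻¹) :
    -- well-definedness: each 1-cocycle of P yields an element of Aut_K(N)
    (∀ lam : P → ↥(Subgroup.center K), IsZ1P θ jb lam →
      ∃ ηa : ↥(autK i0), ∀ n : N, (ηa : MulAut N) n = i0 (lam (π0 n) : K) * n) ∧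
    -- the class of λ is R-fixed iff the corresponding class η̄ is Θ-compatible
    (∀ (lam : P → ↥(Subgroup.center K)) (ηa : ↥(autK i0)), IsZ1P θ jb lam →
      (∀ n : N, (ηa : MulAut N) n = i0 (lam (π0 n) : K) * n) →
      (RFixed θ jb lam ↔ ∀ q : Q, Θ q * mkNK i0 ηa = mkNK i0 ηa * Θ q)) ∧
    -- the induced map on classes is injective: equal classes iff cohomologous cocycles
    (∀ (lam1 lam2 : P → ↥(Subgroup.center K)) (ηa1 ηa2 : ↥(autK i0)),
      IsZ1P θ jb lam1 → IsZ1P θ jb lam2 →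
      (∀ n : N, (ηa1 : MulAut N) n = i0 (lam1 (π0 n) : K) * n) →
      (∀ n : N, (ηa2 : MulAut N) n = i0 (lam2 (π0 n) : K) * n) →
      (mkNK i0 ηa1 = mkNK i0 ηa2 ↔
        ∃ z0 : ↥(Subgroup.center K), ∀ p : P,
          lam2 p = z0⁻¹ * outCenter K (θ (jb p)) z0 * lam1 p)) ∧
    -- surjectivity onto Out_Θ(KNP;K)
    (∀ ηa : ↥(autK i0),
      (∀ k : K, (ηa : MulAut N) (i0 k) = i0 k) →
      (∀ n : N, π0 ((ηa : MulAut N) n) = π0 n) →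
      (∀ q : Q, Θ q * mkNK i0 ηa = mkNK i0 ηa * Θ q) →
      ∃ lam : P → ↥(Subgroup.center K), IsZ1P θ jb lam ∧ RFixed θ jb lam ∧
        ∃ ηb : ↥(autK i0), (∀ n : N, (ηb : MulAut N) n = i0 (lam (π0 n) : K) * n) ∧
          mkNK i0 ηb = mkNK i0 ηa) ∧
    -- the map on classes is multiplicative
    (∀ (lam1 lam2 : P → ↥(Subgroup.center K)) (ηa1 ηa2 ηa12 : ↥(autK i0)),
      IsZ1P θ jb lam1 → IsZ1P θ jb lam2 →
      (∀ n : N, (ηa1 : MulAut N) n = i0 (lam1 (π0 n) : K) * n) →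
      (∀ n : N, (ηa2 : MulAut N) n = i0 (lam2 (π0 n) : K) * n) →
      (∀ n : N, (ηa12 : MulAut N) n = i0 ((lam1 (π0 n) * lam2 (π0 n) :
          ↥(Subgroup.center K)) : K) * n) →
      mkNK i0 ηa12 = mkNK i0 ηa1 * mkNK i0 ηa2) := by
  have hconj := i0_outCenter_eq_conj hi0 hker0 hθN
  refine ⟨fun lam hlam => exists_isTwist_of_isZ1P hker0 hconj hlam,
    fun lam η hlam hη => rFixed_iff_forall_commute hi0 hπ0 hker0 hjb hconj hΘK hΘconjP hlam.1 hη,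
    fun lam1 lam2 η1 η2 hl1 hl2 h1 h2 => mkNK_eq_mkNK_iff hi0 hπ0 hker0 hconj hl1.1 hl2.1 h1 h2,
    fun η hfix hproj hcomm => ?_, fun lam1 lam2 η1 η2 η12 _ _ h1 h2 h12 => ?_⟩
  · obtain ⟨lam, hη⟩ := exists_isTwist_of_forall_fix hi0 hπ0 hker0 hfix hproj
    have hlam := hη.isZ1P hi0 hπ0 hconj
    refine ⟨lam, hlam, ?_, η, hη, rfl⟩
    exact (rFixed_iff_forall_commute hi0 hπ0 hker0 hjb hconj hΘK hΘconjP hlam.1 hη).mpr hcomm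
  · have h12' : η12 = η1 * η2 :=
      Subtype.ext (MulEquiv.ext fun n => (h12 n).trans (IsTwist.mul hker0 h1 h2 n).symm)
    rw [h12', map_mul]

/-- For an iterated extension problem `(KNP,PQR,Θ)`, the canonical
isomorphism `H¹(P,Z(K)) ≃ Out(KNP;K)` restricts to a group isomorphism of the
`R`-fixed subgroup `H¹(P,Z(K))^R` onto `Out_Θ(KNP;K)`, the subgroup of `Θ`-compatible
classes. -/
theorem statement8
    {K P Q R N : Type*} [Group K] [Group P] [Group Q] [Group R] [Group N]
    (i0 : K →* N) (π0 : N →* P) (jb : P →* Q) (fb : Q →* R) (θ : Q →* Out K)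
    (hi0 : Function.Injective i0) (hπ0 : Function.Surjective π0)
    (hker0 : i0.range = π0.ker)
    (hjb : Function.Injective jb) (hfb : Function.Surjective fb)
    (hker1 : jb.range = fb.ker)
    (hθN : ∀ (n : N) (κ : MulAut K),
      (∀ k, i0 (κ k) = n * i0 k * n⁻¹) → θ (jb (π0 n)) = toOut K κ)
    (ΘP : P →* OutNK i0)
    (hΘP : ∀ (n : N) (ν : ↥(autK i0)),
      (∀ m : N, (ν : MulAut N) m = n * m * n⁻¹) → ΘP (π0 n) = mkNK i0 ν)
    (Θ : Q →* OutNK i0)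
    (hΘjb : ∀ p : P, Θ (jb p) = ΘP p)
    (hΘK : ∀ (q : Q) (ν : ↥(autK i0)) (κ : MulAut K), mkNK i0 ν = Θ q →
      (∀ k, i0 (κ k) = (ν : MulAut N) (i0 k)) → θ q = toOut K κ)
    (hΘconjP : ∀ (q : Q) (ν : ↥(autK i0)), mkNK i0 ν = Θ q →
      ∀ n : N, jb (π0 ((ν : MulAut N) n)) = q * jb (π0 n) * q⁻¹) :
    -- well-definedness: each 1-cocycle of P yields an element of Aut_K(N)
    (∀ lam : P → ↥(Subgroup.center K), IsZ1P θ jb lam →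
      ∃ ηa : ↥(autK i0), ∀ n : N, (ηa : MulAut N) n = i0 (lam (π0 n) : K) * n) ∧
    -- the class of λ is R-fixed iff the corresponding class η̄ is Θ-compatible
    (∀ (lam : P → ↥(Subgroup.center K)) (ηa : ↥(autK i0)), IsZ1P θ jb lam →
      (∀ n : N, (ηa : MulAut N) n = i0 (lam (π0 n) : K) * n) →
      (RFixed θ jb lam ↔ ∀ q : Q, Θ q * mkNK i0 ηa = mkNK i0 ηa * Θ q)) ∧
    -- the induced map on classes is injective: equal classes iff cohomologous cocycles
    (∀ (lam1 lam2 : P → ↥(Subgroup.center K)) (ηa1 ηa2 : ↥(autK i0)),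
      IsZ1P θ jb lam1 → IsZ1P θ jb lam2 →
      (∀ n : N, (ηa1 : MulAut N) n = i0 (lam1 (π0 n) : K) * n) →
      (∀ n : N, (ηa2 : MulAut N) n = i0 (lam2 (π0 n) : K) * n) →
      (mkNK i0 ηa1 = mkNK i0 ηa2 ↔
        ∃ z0 : ↥(Subgroup.center K), ∀ p : P,
          lam2 p = z0⁻¹ * outCenter K (θ (jb p)) z0 * lam1 p)) ∧
    -- surjectivity onto Out_Θ(KNP;K)
    (∀ ηa : ↥(autK i0),
      (∀ k : K, (ηa : MulAut N) (i0 k) = i0 k) →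
      (∀ n : N, π0 ((ηa : MulAut N) n) = π0 n) →
      (∀ q : Q, Θ q * mkNK i0 ηa = mkNK i0 ηa * Θ q) →
      ∃ lam : P → ↥(Subgroup.center K), IsZ1P θ jb lam ∧ RFixed θ jb lam ∧
        ∃ ηb : ↥(autK i0), (∀ n : N, (ηb : MulAut N) n = i0 (lam (π0 n) : K) * n) ∧
          mkNK i0 ηb = mkNK i0 ηa) ∧
    -- the map on classes is multiplicative
    (∀ (lam1 lam2 : P → ↥(Subgroup.center K)) (ηa1 ηa2 ηa12 : ↥(autK i0)),
      IsZ1P θ jb lam1 → IsZ1P θ jb lam2 →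
      (∀ n : N, (ηa1 : MulAut N) n = i0 (lam1 (π0 n) : K) * n) →
      (∀ n : N, (ηa2 : MulAut N) n = i0 (lam2 (π0 n) : K) * n) →
      (∀ n : N, (ηa12 : MulAut N) n = i0 ((lam1 (π0 n) * lam2 (π0 n) :
          ↥(Subgroup.center K)) : K) * n) →
      mkNK i0 ηa12 = mkNK i0 ηa1 * mkNK i0 ηa2) :=
  statement8_general i0 π0 jb θ hi0 hπ0 hker0 hjb hθN Θ hΘK hΘconjP

end IES
end

section
/- Let (G,i,π) be an extension of K by Q with outer action θ, let N := π⁻¹(j̄(P)) with the induced extension structure (N,i₀,π₀) of K by P (the P-subextension), let j : N ↪ G be the inclusion, and let Θ : Q → Out(N;K) be the mod-K outer action of the iterated extension (G,j,π). Then every ξ ∈ Aut(KGQ) maps j(N) onto itself, its restriction ξ|_N belongs to Aut(KNP) and is Θ-compatible; moreover, under the canonical isomorphisms H^1(Q,Z(K)) ≅ Out(KGQ;K) and H^1(P,Z(K))^R ≅ Out_Θ(KNP;K), the homomorphism Out(KGQ;K) → Out_Θ(KNP;K) induced by ξ ↦ ξ|_N corresponds to the restriction map res : H^1(Q,Z(K))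 → H^1(P,Z(K))^R, [λ] ↦ [p ↦ λ(j̄(p))]. -/
/-!
Because `π ∘ ξ = π`, the automorphism `ξ` preserves `j(N) = ker (φ̄ ∘ π)` and restricts to `η`.
For `q = π g`, `Θ q` is the class of the restriction `ν` of conjugation by `g`; since `π (ξ g) = π g`
we have `ξ g = i(k) g` for some `k ∈ K`, so `η ν η⁻¹` is the restriction of conjugation by
`ξ g`, namely `conj (i₀ k) ∘ ν`, whose class in `Out(N;K)` is that of `ν`. The cohomological part
is the cocycle identity for `λ` at `j̄ p · q = q · j̄ p'`, with `z₀ = λ q` as the coboundary witness.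
-/

namespace IES

section Restriction

variable {N G : Type*} [Group N] [Group G] {j : N →* G}

noncomputable def restrictAut (hj : Function.Injective j) (e : MulAut G)
    (he : j.range.map (e : G →* G) = j.range) : MulAut N :=
  (MonoidHom.ofInjective hj).trans
    (((e.subgroupMap j.range).trans (MulEquiv.subgroupCongr he)).trans
      (MonoidHom.ofInjective hj).symm)

theorem restrictAut_apply (hj : Function.Injective j) (e : MulAut G)
    (he : j.range.map (e : G →* G) = j.range) (n : N) :
    j (restrictAut hj e he n) = e (j n) :=
  MonoidHom.apply_ofInjective_symm hj _

theorem map_ker_eq_of_comp_eq {H : Type*} [Group H] (f : G →* H) (e : MulAut G)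
    (he : ∀ g, f (e g) = f g) : f.ker.map (e : G →* G) = f.ker := by
  ext g
  rw [Subgroup.map_equiv_eq_comap_symm]
  simp [← he (e.symm g)]

end Restriction

section ModK

variable {K N : Type*} [Group K] [Group N] {i0 : K →* N}

theorem commute_mkNK_of_mul_eq_conj_mul {a b : autK i0} {k : K}
    (h : (a * b : MulAut N) = MulAut.conj (i0 k) * (b * a)) :
    Commute (mkNK i0 a) (mkNK i0 b) := by
  set c := a * b * (b * a)⁻¹
  have hc : mkNK i0 c = 1 :=
    (QuotientGroup.eq_one_iff c).mpr ⟨k, show (a * b : MulAut N) * (b * a)⁻¹ = _ by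
      rw [h, Subgroup.coe_inv, Subgroup.coe_mul, mul_inv_cancel_right]⟩
  calc mkNK i0 a * mkNK i0 b = mkNK i0 (c * (b * a)) := by rw [inv_mul_cancel_right, map_mul]
    _ = mkNK i0 b * mkNK i0 a := by rw [map_mul, hc, one_mul, map_mul]

end ModK

section Extension

variable {K N G Q : Type*} [Group K] [Group N] [Group G] [Group Q]
  {i0 : K →* N} {j : N →* G} {π : G →* Q}

theorem mem_range_iff_of_range_comp_eq_ker (hj : Function.Injective j)
    (hkerπ : (j.comp i0).range = π.ker) (n : N) : n ∈ i0.range ↔ π (j n) = 1 := by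
  rw [← MonoidHom.mem_ker, ← hkerπ, MonoidHom.range_comp, Subgroup.mem_map_iff_mem hj]

theorem mem_autK_of_apply_eq_conj (hj : Function.Injective j)
    (hkerπ : (j.comp i0).range = π.ker) {ν : MulAut N} {g : G}
    (hν : ∀ n, j (ν n) = g * j n * g⁻¹) : ν ∈ autK i0 := by
  intro n
  rw [mem_range_iff_of_range_comp_eq_ker hj hkerπ, mem_range_iff_of_range_comp_eq_ker hj hkerπ,
    hν, map_mul, map_mul, map_inv, conj_eq_one_iff]

theorem mul_eq_conj_mul_of_restrict (hj : Function.Injective j) {ξ : MulAut G} {η ν : MulAut N}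
    {g : G} {k : K} (hη : ∀ n, j (η n) = ξ (j n)) (hν : ∀ n, j (ν n) = g * j n * g⁻¹)
    (hξg : ξ g = j (i0 k) * g) :
    η * ν = MulAut.conj (i0 k) * (ν * η) := by
  ext n
  apply hj
  simp only [MulAut.mul_apply, MulAut.conj_apply, map_mul, map_inv, hη, hν, hξg]
  group

theorem commute_mkNK_of_restrict (hj : Function.Injective j) (hπ : Function.Surjective π)
    (hkerπ : (j.comp i0).range = π.ker) [j.range.Normal] (Θ : Q →* OutNK i0)
    (hΘ : ∀ (g : G) (ν : ↥(autK i0)),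
      (∀ n : N, j ((ν : MulAut N) n) = g * j n * g⁻¹) → Θ (π g) = mkNK i0 ν)
    {ξ : MulAut G} (hξπ : ∀ g : G, π (ξ g) = π g) {η : autK i0}
    (hη : ∀ n, j ((η : MulAut N) n) = ξ (j n)) (q : Q) :
    Commute (Θ q) (mkNK i0 η) := by
  obtain ⟨g, rfl⟩ := hπ q
  obtain ⟨k, hk⟩ : ξ g * g⁻¹ ∈ (j.comp i0).range := by
    rw [hkerπ, MonoidHom.mem_ker, map_mul, map_inv, hξπ, mul_inv_cancel]
  have hν := restrictAut_apply hj (MulAut.conj g) (Subgroup.Normal.map_conj_eq j.range g)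
  let ν : autK i0 := ⟨_, mem_autK_of_apply_eq_conj hj hkerπ hν⟩
  rw [hΘ g ν hν]
  exact (commute_mkNK_of_mul_eq_conj_mul
    (mul_eq_conj_mul_of_restrict hj hη hν (mul_inv_eq_iff_eq_mul.mp hk.symm))).symm

end Extension

section CocycleRestriction

variable {K P Q : Type*} [Group K] [Group P] [Group Q] {θ : Q →* Out K}
  {lam : Q → ↥(Subgroup.center K)}

theorem IsZ1Q.comp (hlam : IsZ1Q θ lam) (jb : P →* Q) : IsZ1P θ jb (fun p => lam (jb p)) :=
  ⟨by simp only [map_one, hlam.1], fun p1 p2 => by simp only [map_mul, hlam.2]⟩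

theorem IsZ1Q.apply_of_mul_eq_mul (hlam : IsZ1Q θ lam) {x y q : Q} (h : x * q = q * y) :
    outCenter K (θ q) (lam y) = (lam q)⁻¹ * outCenter K (θ x) (lam q) * lam x := by
  have hxq := hlam.2 x q
  rw [h, hlam.2 q y] at hxq
  calc outCenter K (θ q) (lam y) = (lam q)⁻¹ * (lam x * outCenter K (θ x) (lam q)) := by
        rw [← hxq, inv_mul_cancel_left]
    _ = (lam q)⁻¹ * outCenter K (θ x) (lam q) * lam x := by
        rw [mul_assoc, Std.Commutative.comm (op := HMul.hMul) (lam x)]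

theorem IsZ1Q.rFixed_comp (hlam : IsZ1Q θ lam) (jb : P →* Q) :
    RFixed θ jb (fun p => lam (jb p)) :=
  fun q => ⟨lam q, fun p p' h => hlam.apply_of_mul_eq_mul (by rw [h]; group)⟩

end CocycleRestriction

theorem statement9_general
    {K P Q R N G : Type*} [Group K] [Group P] [Group Q] [Group R] [Group N] [Group G]
    (i0 : K →* N) (π0 : N →* P) (jb : P →* Q) (fb : Q →* R)
    (j : N →* G) (π : G →* Q) (θ : Q →* Out K)
    (hjb : Function.Injective jb)
    (hj : Function.Injective j) (hπ : Function.Surjective π)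
    (hcomm : π.comp j = jb.comp π0)
    (hkerφ : j.range = (fb.comp π).ker)
    (hkerπ : (j.comp i0).range = π.ker)
    -- Θ is the mod-K outer action of the iterated extension (G,j,π)
    (Θ : Q →* OutNK i0)
    (hΘ : ∀ (g : G) (ν : ↥(autK i0)),
      (∀ n : N, j ((ν : MulAut N) n) = g * j n * g⁻¹) → Θ (π g) = mkNK i0 ν)
    -- an automorphism of the extension (KGQ)
    (ξ : MulAut G)
    (hξi : ∀ k : K, ξ ((j.comp i0) k) = (j.comp i0) k)
    (hξπ : ∀ g : G, π (ξ g) = π g) :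
    ∃ η : MulAut N,
      -- ξ maps j(N) onto itself, with restriction η
      (∀ n : N, j (η n) = ξ (j n)) ∧
      -- η belongs to Aut(KNP)
      (∀ k : K, η (i0 k) = i0 k) ∧
      (∀ n : N, π0 (η n) = π0 n) ∧
      -- η is Θ-compatible
      (∀ ηa : ↥(autK i0), (ηa : MulAut N) = η →
        ∀ q : Q, Θ q * mkNK i0 ηa = mkNK i0 ηa * Θ q) ∧
      -- under the canonical isomorphisms, ξ ↦ ξ|_N corresponds to the restriction map
      -- on cocycles, which lands in the R-fixed classes
      (∀ lam : Q → ↥(Subgroup.center K), IsZ1Q θ lam →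
        (∀ g : G, ξ g = (j.comp i0) (lam (π g) : K) * g) →
        (∀ n : N, η n = i0 (lam (jb (π0 n)) : K) * n) ∧
        IsZ1P θ jb (fun p => lam (jb p)) ∧
        RFixed θ jb (fun p => lam (jb p))) := by
  have hπj : ∀ n, π (j n) = jb (π0 n) := DFunLike.congr_fun hcomm
  have : j.range.Normal := hkerφ ▸ MonoidHom.normal_ker _
  have hξN : j.range.map (ξ : G →* G) = j.range := by
    rw [hkerφ]
    exact map_ker_eq_of_comp_eq _ ξ fun g => congrArg fb (hξπ g)
  have hη := restrictAut_apply hj ξ hξN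
  refine ⟨restrictAut hj ξ hξN, hη, fun k => hj ((hη _).trans (hξi k)),
    fun n => hjb ?_, ?_, fun lam hlam hξlam => ⟨fun n => hj ?_, hlam.comp jb, hlam.rFixed_comp jb⟩⟩
  · rw [← hπj, ← hπj, hη, hξπ]
  · rintro ηa hηa q
    exact commute_mkNK_of_restrict hj hπ hkerπ Θ hΘ hξπ (hηa ▸ hη) q
  · rw [hη, hξlam, hπj, map_mul]
    rfl

/-- Let `(G,i,π)` be an extension of `K` by `Q` with outer action
`θ`, with `P`-subextension `(N,i₀,π₀)` (inclusion `j`, so `i = j∘i₀`), and let `Θ` be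
the mod-`K` outer action of the iterated extension `(G,j,π)`.  Every `ξ ∈ Aut(KGQ)`
stabilizes `j(N)`; its restriction `ξ|_N` lies in `Aut(KNP)` and is `Θ`-compatible,
and under the canonical isomorphisms the map `ξ ↦ ξ|_N` corresponds to the restriction
map `res : H¹(Q,Z(K)) → H¹(P,Z(K))^R`. -/
theorem statement9
    {K P Q R N G : Type*} [Group K] [Group P] [Group Q] [Group R] [Group N] [Group G]
    (i0 : K →* N) (π0 : N →* P) (jb : P →* Q) (fb : Q →* R)
    (j : N →* G) (π : G →* Q) (θ : Q →* Out K)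
    (hi0 : Function.Injective i0) (hπ0 : Function.Surjective π0)
    (hker0 : i0.range = π0.ker)
    (hjb : Function.Injective jb) (hfb : Function.Surjective fb)
    (hker1 : jb.range = fb.ker)
    (hj : Function.Injective j) (hπ : Function.Surjective π)
    (hcomm : π.comp j = jb.comp π0)
    (hkerφ : j.range = (fb.comp π).ker)
    (hkerπ : (j.comp i0).range = π.ker)
    (hθ : ∀ (g : G) (κ : MulAut K),
      (∀ k, (j.comp i0) (κ k) = g * (j.comp i0) k * g⁻¹) → θ (π g) = toOut K κ)
    -- Θ is the mod-K outer action of the iterated extension (G,j,π)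
    (Θ : Q →* OutNK i0)
    (hΘ : ∀ (g : G) (ν : ↥(autK i0)),
      (∀ n : N, j ((ν : MulAut N) n) = g * j n * g⁻¹) → Θ (π g) = mkNK i0 ν)
    -- an automorphism of the extension (KGQ)
    (ξ : MulAut G)
    (hξi : ∀ k : K, ξ ((j.comp i0) k) = (j.comp i0) k)
    (hξπ : ∀ g : G, π (ξ g) = π g) :
    ∃ η : MulAut N,
      -- ξ maps j(N) onto itself, with restriction η
      (∀ n : N, j (η n) = ξ (j n)) ∧
      -- η belongs to Aut(KNP)
      (∀ k : K, η (i0 k) = i0 k) ∧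
      (∀ n : N, π0 (η n) = π0 n) ∧
      -- η is Θ-compatible
      (∀ ηa : ↥(autK i0), (ηa : MulAut N) = η →
        ∀ q : Q, Θ q * mkNK i0 ηa = mkNK i0 ηa * Θ q) ∧
      -- under the canonical isomorphisms, ξ ↦ ξ|_N corresponds to the restriction map
      -- on cocycles, which lands in the R-fixed classes
      (∀ lam : Q → ↥(Subgroup.center K), IsZ1Q θ lam →
        (∀ g : G, ξ g = (j.comp i0) (lam (π g) : K) * g) →
        (∀ n : N, η n = i0 (lam (jb (π0 n)) : K) * n) ∧
        IsZ1P θ jb (fun p => lam (jb p)) ∧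
        RFixed θ jb (fun p => lam (jb p))) :=
  statement9_general i0 π0 jb fb j π θ hjb hj hπ hcomm hkerφ hkerπ Θ hΘ ξ hξi hξπ

end IES
end
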